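/- arXiv:2204.07639 — 10 statements merged into one kernel-verified Lean document; each statement's English description precedes it below -/
import Mathlib

section
/- Let R be a G-graded ring and S a minimal graded left ideal of R. Then the sum U of all graded left submodules of R that are isomorphic to some shift of S is a two-sided graded ideal of R. -/
/-!
Right multiplication by a homogeneous element `r` of degree `g` maps a graded left ideal
`T ≅ S(σ)` either to zero or isomorphically onto `T r ≅ T(g⁻¹) ≅ S(g⁻¹σ)`: its kernel
`T ∩ ann(r)` is a graded submodule of `T`, which is graded-simple because `S` is. Splitting
an arbitrary `r` into homogeneous components gives `U r ⊆ U`, and `U` is graded as a sum of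
graded left ideals.
-/

open DirectSum

universe u v w

variable {G : Type u} [Group G] [DecidableEq G]
variable {R : Type v} [Ring R]

/-- `𝒜` is a `G`-grading of the ring `R`: homogeneous components are additive
subgroups, `1` is homogeneous of trivial degree, multiplication respects degrees,
and `R` is the internal direct sum of the components. -/
def IsGRing (𝒜 : G → AddSubgroup R) : Prop :=
  (1 : R) ∈ 𝒜 1 ∧
  (∀ (g h : G) (a b : R), a ∈ 𝒜 g → b ∈ 𝒜 h → a * b ∈ 𝒜 (g * h)) ∧
  DirectSum.IsInternal 𝒜

/-- A left ideal is graded when it is spanned by its homogeneous elements. -/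
def IsGradedLeftIdeal (𝒜 : G → AddSubgroup R) (I : Submodule R R) : Prop :=
  I = Submodule.span R ((I : Set R) ∩ ⋃ g, (𝒜 g : Set R))

/-- A minimal graded left ideal (a graded-simple graded left submodule of `R`). -/
def IsMinGradedLeftIdeal (𝒜 : G → AddSubgroup R) (S : Submodule R R) : Prop :=
  IsGradedLeftIdeal 𝒜 S ∧ S ≠ ⊥ ∧
    ∀ T : Submodule R R, T ≤ S → IsGradedLeftIdeal 𝒜 T → T = ⊥ ∨ T = S

/-- A maximal graded left ideal. -/
def IsMaxGradedLeftIdeal (𝒜 : G → AddSubgroup R) (I : Submodule R R) : Prop :=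
  IsGradedLeftIdeal 𝒜 I ∧ I ≠ ⊤ ∧
    ∀ J : Submodule R R, IsGradedLeftIdeal 𝒜 J → I < J → J = ⊤

/-- The graded Jacobson radical: intersection of all maximal graded left ideals. -/
def grJacobson (𝒜 : G → AddSubgroup R) : Submodule R R :=
  sInf {I : Submodule R R | IsMaxGradedLeftIdeal 𝒜 I}

/-- Left annihilator of a subset of `R`. -/
def annLset (X : Set R) : Set R := {r : R | ∀ x ∈ X, r * x = 0}

/-- Right annihilator of a subset of `R`. -/
def annRset (X : Set R) : Set R := {r : R | ∀ x ∈ X, x * r = 0}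

/-- Left annihilator of an element, as a left ideal. -/
def annLIdeal (x : R) : Submodule R R where
  carrier := {r : R | r * x = 0}
  add_mem' := by
    intro a b ha hb
    simp only [Set.mem_setOf_eq] at *
    rw [add_mul, ha, hb, add_zero]
  zero_mem' := by simp
  smul_mem' := by
    intro c a ha
    simp only [Set.mem_setOf_eq, smul_eq_mul] at *
    rw [mul_assoc, ha, mul_zero]

/-- A left ideal is essential if it meets every nonzero left ideal nontrivially. -/
def IsEssentialLeftIdeal (I : Submodule R R) : Prop :=
  ∀ J : Submodule R R, J ≠ ⊥ → I ⊓ J ≠ ⊥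

/-- Homogeneous part of degree `g` of the graded singular ideal. -/
def grSingSet (𝒜 : G → AddSubgroup R) (g : G) : Set R :=
  {x : R | x ∈ 𝒜 g ∧ IsEssentialLeftIdeal (annLIdeal x)}

/-- The graded singular ideal `Z^gr(R) = ⊕_g Z^gr(R)_g`. -/
def grSing (𝒜 : G → AddSubgroup R) : AddSubgroup R :=
  AddSubgroup.closure (⋃ g, grSingSet 𝒜 g)

/-- `R` is graded left self-injective (graded Baer criterion): every morphism of
degree `σ` from a graded left ideal to `R` is right multiplication by an element
of degree `σ`. -/
def GrLeftSelfInjective (𝒜 : G → AddSubgroup R) : Prop :=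
  ∀ I : Submodule R R, IsGradedLeftIdeal 𝒜 I → ∀ σ : G, ∀ f : I →ₗ[R] R,
    (∀ (g : G) (x : I), (x : R) ∈ 𝒜 g → f x ∈ 𝒜 (g * σ)) →
    ∃ m ∈ 𝒜 σ, ∀ x : I, f x = (x : R) * m

/-- Ascending chain condition on graded left ideals. -/
def GrLeftNoetherian (𝒜 : G → AddSubgroup R) : Prop :=
  ∀ f : ℕ → Submodule R R, (∀ n, IsGradedLeftIdeal 𝒜 (f n)) → Monotone f →
    ∃ n, ∀ m, n ≤ m → f m = f n

/-- Descending chain condition on graded left ideals. -/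
def GrLeftArtinian (𝒜 : G → AddSubgroup R) : Prop :=
  ∀ f : ℕ → Submodule R R, (∀ n, IsGradedLeftIdeal 𝒜 (f n)) → Antitone f →
    ∃ n, ∀ m, n ≤ m → f m = f n

/-- Graded von Neumann regularity. -/
def GrVNRegular (𝒜 : G → AddSubgroup R) : Prop :=
  ∀ (g : G) (a : R), a ∈ 𝒜 g → ∃ b : R, a = a * b * a

/-- Graded semisimplicity: `R` is the sum of its minimal graded left ideals. -/
def GrSemisimple (𝒜 : G → AddSubgroup R) : Prop :=
  sSup {S : Submodule R R | IsMinGradedLeftIdeal 𝒜 S} = (⊤ : Submodule R R)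

/-- `ℳ` is a `G`-grading of the left `R`-module `M`, compatible with `𝒜`. -/
def IsGModule (𝒜 : G → AddSubgroup R) {M : Type w} [AddCommGroup M] [Module R M]
    (ℳ : G → AddSubgroup M) : Prop :=
  (∀ (g h : G) (a : R) (m : M), a ∈ 𝒜 g → m ∈ ℳ h → a • m ∈ ℳ (g * h)) ∧
  DirectSum.IsInternal ℳ

/-- A submodule is graded when it is spanned by its homogeneous elements. -/
def IsGradedSubmodule {M : Type w} [AddCommGroup M] [Module R M]
    (ℳ : G → AddSubgroup M) (N : Submodule R M) : Prop :=
  N = Submodule.span R ((N : Set M) ∩ ⋃ g, (ℳ g : Set M))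

/-- `T` is isomorphic, as a graded left `R`-module, to the `σ`-shift of `S`
(an element of degree `g` is carried to an element of degree `g·σ`). -/
def IsoToShift (𝒜 : G → AddSubgroup R) (T S : Submodule R R) (σ : G) : Prop :=
  ∃ e : T ≃ₗ[R] S, ∀ (g : G) (x : T), (x : R) ∈ 𝒜 g ↔ ((e x : R) ∈ 𝒜 (g * σ))

/-- `𝒜` reindexed by `Additive G`, the form in which Mathlib's graded-ring API takes a grading. -/
abbrev addGrading (𝒜 : G → AddSubgroup R) (i : Additive G) : AddSubgroup R := 𝒜 i.toMul

noncomputable abbrev IsGRing.gradedRing {𝒜 : G → AddSubgroup R} (h𝒜 : IsGRing 𝒜) :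
    GradedRing (addGrading 𝒜) :=
  { h𝒜.2.2.chooseDecomposition with
    one_mem := h𝒜.1
    mul_mem := fun _ _ _ _ => h𝒜.2.1 _ _ _ _ }

section IsoToShift

variable {𝒜 : G → AddSubgroup R} {S T T' : Submodule R R} {σ τ : G}

theorem IsoToShift.symm (h : IsoToShift 𝒜 T S σ) : IsoToShift 𝒜 S T σ⁻¹ := by
  obtain ⟨e, he⟩ := h
  refine ⟨e.symm, fun g x => ?_⟩
  rw [he (g * σ⁻¹), e.apply_symm_apply, inv_mul_cancel_right]

theorem IsoToShift.trans (h : IsoToShift 𝒜 T' T τ) (h' : IsoToShift 𝒜 T S σ) :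
    IsoToShift 𝒜 T' S (τ * σ) := by
  obtain ⟨e, he⟩ := h
  obtain ⟨e', he'⟩ := h'
  exact ⟨e.trans e', fun g x => by rw [he, he', mul_assoc]; rfl⟩

end IsoToShift

section GradedRing

variable {𝒜 : G → AddSubgroup R} [GradedRing (addGrading 𝒜)]

theorem mul_mem_grading {a b : R} {g h : G} (ha : a ∈ 𝒜 g) (hb : b ∈ 𝒜 h) : a * b ∈ 𝒜 (g * h) :=
  SetLike.mul_mem_graded (A := addGrading 𝒜) (i := .ofMul g) (j := .ofMul h) ha hb

theorem isGradedLeftIdeal_iff_isHomogeneous {I : Submodule R R} :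
    IsGradedLeftIdeal 𝒜 I ↔ Ideal.IsHomogeneous (addGrading 𝒜) I := by
  classical
  constructor
  · intro hI
    rw [hI]
    refine Ideal.homogeneous_span _ _ fun x hx => ?_
    obtain ⟨g, hg⟩ := Set.mem_iUnion.1 hx.2
    exact ⟨.ofMul g, hg⟩
  · intro hI
    refine le_antisymm (fun x hx => ?_) (Submodule.span_le.2 Set.inter_subset_left)
    rw [← DirectSum.sum_support_decompose (addGrading 𝒜) x]
    exact Submodule.sum_mem _ fun i _ =>
      Submodule.subset_span ⟨hI i hx, Set.mem_iUnion.2 ⟨i.toMul, SetLike.coe_mem _⟩⟩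

theorem IsGradedLeftIdeal.decompose_mem {I : Submodule R R} (hI : IsGradedLeftIdeal 𝒜 I)
    {x : R} (hx : x ∈ I) (i : Additive G) : (decompose (addGrading 𝒜) x i : R) ∈ I :=
  isGradedLeftIdeal_iff_isHomogeneous.1 hI i hx

theorem IsGradedLeftIdeal.range {T : Submodule R R} (hT : IsGradedLeftIdeal 𝒜 T)
    (f : T →ₗ[R] R) (hf : ∀ (x : T) (g : G), (x : R) ∈ 𝒜 g → ∃ h, f x ∈ 𝒜 h) :
    IsGradedLeftIdeal 𝒜 (LinearMap.range f) := by
  classical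
  refine le_antisymm ?_ (Submodule.span_le.2 Set.inter_subset_left)
  rintro _ ⟨⟨x, hx⟩, rfl⟩
  have hsum : (⟨x, hx⟩ : T) = ∑ i ∈ (decompose (addGrading 𝒜) x).support,
      ⟨_, hT.decompose_mem hx i⟩ :=
    Subtype.ext (by simp [DirectSum.sum_support_decompose])
  rw [hsum, map_sum]
  exact Submodule.sum_mem _ fun i _ => Submodule.subset_span
    ⟨⟨_, rfl⟩, Set.mem_iUnion.2 (hf _ i.toMul (SetLike.coe_mem _))⟩

theorem isGradedLeftIdeal_annLIdeal {r : R} {g : G} (hr : r ∈ 𝒜 g) :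
    IsGradedLeftIdeal 𝒜 (annLIdeal r) := by
  refine isGradedLeftIdeal_iff_isHomogeneous.2 fun i x (hx : x * r = 0) => ?_
  show _ * r = 0
  rw [← DirectSum.coe_decompose_mul_add_of_right_mem (addGrading 𝒜) (j := .ofMul g) hr, hx,
    decompose_zero, DirectSum.zero_apply, ZeroMemClass.coe_zero]

theorem IsMinGradedLeftIdeal.of_isoToShift {S T : Submodule R R} {σ : G}
    (hS : IsMinGradedLeftIdeal 𝒜 S) (hT : IsGradedLeftIdeal 𝒜 T) (hTS : IsoToShift 𝒜 T S σ) :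
    IsMinGradedLeftIdeal 𝒜 T := by
  obtain ⟨e, he⟩ := hTS
  refine ⟨hT, fun hT0 => hS.2.1 ?_, fun K hKT hK => ?_⟩
  · have : Subsingleton T := by rw [hT0]; infer_instance
    exact Submodule.subsingleton_iff_eq_bot.1 e.symm.injective.subsingleton
  let f : K →ₗ[R] R := S.subtype ∘ₗ e.toLinearMap ∘ₗ Submodule.inclusion hKT
  have hf_inj : Function.Injective f :=
    S.injective_subtype.comp (e.injective.comp (Submodule.inclusion_injective hKT))
  have hf_le : LinearMap.range f ≤ S := by
    rintro _ ⟨x, rfl⟩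
    exact (e _).2
  rcases hS.2.2 _ hf_le (hK.range f fun x g hx => ⟨g * σ, (he g _).1 hx⟩) with h0 | hS'
  · refine Or.inl (Submodule.subsingleton_iff_eq_bot.1 ⟨fun x y => hf_inj ?_⟩)
    rw [LinearMap.range_eq_bot.1 h0]
    rfl
  · refine Or.inr (le_antisymm hKT fun t ht => ?_)
    have hmem : (e ⟨t, ht⟩ : R) ∈ LinearMap.range f := by
      rw [hS']
      exact (e ⟨t, ht⟩).2
    obtain ⟨k, hk⟩ := hmem
    have hkt : (k : R) = t := congrArg Subtype.val (e.injective (Subtype.ext hk))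
    exact hkt ▸ k.2

theorem mem_of_mul_mem_of_inf_annLIdeal_eq_bot {T : Submodule R R} (hT : IsGradedLeftIdeal 𝒜 T)
    {r : R} {g k : G} (hr : r ∈ 𝒜 g) (hTr : T ⊓ annLIdeal r = ⊥) {t : R} (ht : t ∈ T)
    (htr : t * r ∈ 𝒜 (k * g)) : t ∈ 𝒜 k := by
  set tk : R := (decompose (addGrading 𝒜) t (.ofMul k) : R)
  have hcomp : tk * r = t * r := by
    rw [← DirectSum.coe_decompose_mul_add_of_right_mem (addGrading 𝒜) hr]
    exact DirectSum.decompose_of_mem_same (addGrading 𝒜) htr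
  have hdiff : t - tk ∈ T ⊓ annLIdeal r :=
    ⟨T.sub_mem ht (hT.decompose_mem ht _), show (t - tk) * r = 0 by rw [sub_mul, hcomp, sub_self]⟩
  rw [hTr, Submodule.mem_bot, sub_eq_zero] at hdiff
  exact hdiff ▸ SetLike.coe_mem _

theorem IsMinGradedLeftIdeal.map_mulRight_eq_bot_or {T : Submodule R R}
    (hT : IsMinGradedLeftIdeal 𝒜 T) {r : R} {g : G} (hr : r ∈ 𝒜 g) :
    T.map (LinearMap.mulRight R r) = ⊥ ∨
      IsGradedLeftIdeal 𝒜 (T.map (LinearMap.mulRight R r)) ∧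
        IsoToShift 𝒜 (T.map (LinearMap.mulRight R r)) T g⁻¹ := by
  have hK : IsGradedLeftIdeal 𝒜 (T ⊓ annLIdeal r) :=
    isGradedLeftIdeal_iff_isHomogeneous.2 ((isGradedLeftIdeal_iff_isHomogeneous.1 hT.1).inf
      (isGradedLeftIdeal_iff_isHomogeneous.1 (isGradedLeftIdeal_annLIdeal hr)))
  rcases hT.2.2 _ inf_le_left hK with hbot | htop
  · right
    set f := (LinearMap.mulRight R r).domRestrict T
    have hf_inj : Function.Injective f := by
      rw [← LinearMap.ker_eq_bot, eq_bot_iff]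
      rintro ⟨t, ht⟩ htr
      have : t ∈ T ⊓ annLIdeal r := ⟨ht, LinearMap.mem_ker.1 htr⟩
      rw [hbot, Submodule.mem_bot] at this
      simp [this]
    rw [← LinearMap.range_domRestrict]
    refine ⟨hT.1.range f fun x k hx => ⟨k * g, mul_mem_grading hx hr⟩, IsoToShift.symm ?_⟩
    exact ⟨LinearEquiv.ofInjective f hf_inj, fun k t =>
      ⟨fun ht => mul_mem_grading ht hr,
        mem_of_mul_mem_of_inf_annLIdeal_eq_bot hT.1 hr hbot t.2⟩⟩
  · left
    rw [eq_bot_iff]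
    rintro _ ⟨x, hx, rfl⟩
    exact (htop.ge hx).2

end GradedRing

def grIsotypicComponent (𝒜 : G → AddSubgroup R) (S : Submodule R R) : Submodule R R :=
  sSup {T : Submodule R R | IsGradedLeftIdeal 𝒜 T ∧ ∃ σ : G, IsoToShift 𝒜 T S σ}

theorem le_grIsotypicComponent {𝒜 : G → AddSubgroup R} {S T : Submodule R R}
    (hT : IsGradedLeftIdeal 𝒜 T) {σ : G} (hTS : IsoToShift 𝒜 T S σ) : T ≤ grIsotypicComponent 𝒜 S :=
  le_sSup ⟨hT, σ, hTS⟩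

section GrIsotypicComponent

variable {𝒜 : G → AddSubgroup R} [GradedRing (addGrading 𝒜)] {S : Submodule R R}

theorem isGradedLeftIdeal_grIsotypicComponent :
    IsGradedLeftIdeal 𝒜 (grIsotypicComponent 𝒜 S) :=
  isGradedLeftIdeal_iff_isHomogeneous.2
    (Ideal.IsHomogeneous.sSup fun _ hT => isGradedLeftIdeal_iff_isHomogeneous.1 hT.1)

theorem mul_mem_grIsotypicComponent_of_mem_grading (hS : IsMinGradedLeftIdeal 𝒜 S)
    {T : Submodule R R} (hT : IsGradedLeftIdeal 𝒜 T) {σ : G} (hTS : IsoToShift 𝒜 T S σ)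
    {x r : R} {g : G} (hx : x ∈ T) (hr : r ∈ 𝒜 g) : x * r ∈ grIsotypicComponent 𝒜 S := by
  have hxr : x * r ∈ T.map (LinearMap.mulRight R r) := ⟨x, hx, rfl⟩
  rcases (hS.of_isoToShift hT hTS).map_mulRight_eq_bot_or hr with h0 | ⟨hgr, hiso⟩
  · rw [h0, Submodule.mem_bot] at hxr
    exact hxr ▸ Submodule.zero_mem _
  · exact le_grIsotypicComponent hgr (hiso.trans hTS) hxr

theorem mul_mem_grIsotypicComponent (hS : IsMinGradedLeftIdeal 𝒜 S) {x : R}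
    (hx : x ∈ grIsotypicComponent 𝒜 S) (r : R) : x * r ∈ grIsotypicComponent 𝒜 S := by
  suffices grIsotypicComponent 𝒜 S ≤ (grIsotypicComponent 𝒜 S).comap (LinearMap.mulRight R r) from
    this hx
  refine sSup_le ?_
  rintro T ⟨hT, σ, hTS⟩ y hy
  show y * r ∈ grIsotypicComponent 𝒜 S
  classical
  rw [← DirectSum.sum_support_decompose (addGrading 𝒜) r, Finset.mul_sum]
  exact Submodule.sum_mem _ fun i _ =>
    mul_mem_grIsotypicComponent_of_mem_grading hS hT hTS hy (SetLike.coe_mem _)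

end GrIsotypicComponent

/-- the sum of all graded left submodules of `R` isomorphic to some
shift of a minimal graded left ideal `S` is a two-sided graded ideal of `R`. -/
theorem isoshift_component_is_graded_twosided_ideal
    (𝒜 : G → AddSubgroup R) (h𝒜 : IsGRing 𝒜)
    (S : Submodule R R) (hS : IsMinGradedLeftIdeal 𝒜 S) :
    IsGradedLeftIdeal 𝒜
        (sSup {T : Submodule R R | IsGradedLeftIdeal 𝒜 T ∧ ∃ σ : G, IsoToShift 𝒜 T S σ}) ∧
    ∀ x ∈ sSup {T : Submodule R R | IsGradedLeftIdeal 𝒜 T ∧ ∃ σ : G, IsoToShift 𝒜 T S σ},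
      ∀ r : R,
        x * r ∈ sSup {T : Submodule R R | IsGradedLeftIdeal 𝒜 T ∧ ∃ σ : G, IsoToShift 𝒜 T S σ} := by
  let _ := h𝒜.gradedRing
  exact ⟨isGradedLeftIdeal_grIsotypicComponent, fun x hx r => mul_mem_grIsotypicComponent hS hx r⟩
end

section
/- With A = M_n(Δ)(g_1,…,g_n) as above, for τ ∈ G one has Σ_1(τ) ≅ Σ_1 as graded left A-modules if and only if τ ∈ g_1^{-1}·supp(Δ)·g_1, where supp(Δ) = {σ ∈ G : Δ_σ ≠ 0}. -/
open DirectSum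

universe u v w

variable {G : Type u} [Group G] [DecidableEq G]
variable {R : Type v} [Ring R]

/-- `𝒟` makes `Δ` a `G`-graded division ring. -/
def IsGDivisionRing {Δ : Type*} [Ring Δ] (𝒟 : G → AddSubgroup Δ) : Prop :=
  IsGRing 𝒟 ∧ ∀ (g : G) (a : Δ), a ∈ 𝒟 g → a ≠ 0 → IsUnit a

/-- `Σ_1(τ₁) ≅ Σ_1(τ₂)` as graded left `A`-modules, for
`A = M_n(Δ)(g_1,…,g_n)` acting by `mulVec` on columns: an additive bijection
commuting with the `A`-action and carrying the degree-`σ` component of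
`Σ_1(τ₁)` onto that of `Σ_1(τ₂)`, for every `σ`. -/
def ShiftIsoRel {Δ : Type*} [Ring Δ] (𝒟 : G → AddSubgroup Δ) (n : ℕ)
    (gv : Fin n → G) (i0 : Fin n) (τ₁ τ₂ : G) : Prop :=
  ∃ e : (Fin n → Δ) ≃+ (Fin n → Δ),
    (∀ (a : Matrix (Fin n) (Fin n) Δ) (z : Fin n → Δ), e (a.mulVec z) = a.mulVec (e z)) ∧
    (∀ (σ : G) (z : Fin n → Δ),
      (∀ i, z i ∈ 𝒟 (gv i * (σ * τ₁) * (gv i0)⁻¹)) ↔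
      (∀ i, e z i ∈ 𝒟 (gv i * (σ * τ₂) * (gv i0)⁻¹)))

/-!
A graded isomorphism `Σ_1(τ₁) ≅ Σ_1(τ₂)` commutes with the matrix unit `e_{11}`, so the preimage
of the first coordinate vector (homogeneous of degree `τ₂⁻¹` in `Σ_1(τ₂)`) has a nonzero first
entry, and that entry has degree `g_1 τ₂⁻¹ τ₁ g_1⁻¹` in `Δ`. Conversely, a nonzero `d` of that
degree is a unit whose inverse is homogeneous of the inverse degree, and right multiplication of
columns by `d⁻¹` is a graded isomorphism.
-/

section GradedRing

variable {Δ : Type*} [Ring Δ] {𝒟 : G → AddSubgroup Δ}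

theorem coe_decompose_mul_mul_of_right_mem [Decomposition 𝒟]
    (hmul : ∀ (g h : G) (a b : Δ), a ∈ 𝒟 g → b ∈ 𝒟 h → a * b ∈ 𝒟 (g * h))
    (c : Δ) {d : Δ} {g : G} (hd : d ∈ 𝒟 g) (k : G) :
    (decompose 𝒟 (c * d) (k * g) : Δ) = decompose 𝒟 c k * d := by
  induction c using Decomposition.inductionOn 𝒟 with
  | zero => simp
  | @homogeneous i c =>
    have hcd := hmul i g _ d c.2 hd
    by_cases hik : i = k
    · subst hik
      rw [decompose_of_mem_same 𝒟 hcd, decompose_of_mem_same 𝒟 c.2]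
    · rw [decompose_of_mem_ne 𝒟 hcd (mul_left_injective g |>.ne hik),
        decompose_of_mem_ne 𝒟 c.2 hik, zero_mul]
  | add c c' hc hc' => simp [add_mul, hc, hc']

theorem IsGRing.inv_mem (h : IsGRing 𝒟) {u : Δˣ} {g : G} (hu : (u : Δ) ∈ 𝒟 g) :
    (↑u⁻¹ : Δ) ∈ 𝒟 g⁻¹ := by
  let := h.2.2.chooseDecomposition
  have hleft : (decompose 𝒟 (↑u⁻¹ : Δ) g⁻¹ : Δ) * u = 1 := by
    rw [← coe_decompose_mul_mul_of_right_mem h.2.1 _ hu, inv_mul_cancel, u.inv_mul,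
      decompose_of_mem_same 𝒟 h.1]
  rw [Units.inv_eq_of_mul_eq_one_left hleft]
  exact (decompose 𝒟 _ g⁻¹).2

end GradedRing

section ColumnModule

variable {Δ : Type*} [Ring Δ] {𝒟 : G → AddSubgroup Δ} {n : ℕ} {gv : Fin n → G} {i0 : Fin n}
  {τ₁ τ₂ : G}

omit [DecidableEq G] in
theorem ShiftIsoRel.ne_bot [Nontrivial Δ] (h1 : (1 : Δ) ∈ 𝒟 1)
    (h : ShiftIsoRel 𝒟 n gv i0 τ₁ τ₂) : 𝒟 (gv i0 * τ₂⁻¹ * τ₁ * (gv i0)⁻¹) ≠ ⊥ := by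
  obtain ⟨e, he_mulVec, he_deg⟩ := h
  set z := e.symm (Pi.single i0 1)
  have hz : z i0 ≠ 0 := by
    intro hz0
    have := congrFun (he_mulVec (Matrix.single i0 i0 1) z) i0
    simp [Matrix.single_mulVec_eq, hz0, z] at this
  have hdeg : ∀ i, e z i ∈ 𝒟 (gv i * (τ₂⁻¹ * τ₂) * (gv i0)⁻¹) := by
    intro i
    rw [e.apply_symm_apply, inv_mul_cancel, mul_one]
    by_cases hi : i = i0
    · subst hi
      simpa using h1
    · simp [Pi.single_eq_of_ne hi]
  have hz_mem := (he_deg τ₂⁻¹ z).2 hdeg i0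
  rw [← mul_assoc] at hz_mem
  rw [Ne, AddSubgroup.eq_bot_iff_forall]
  exact fun hbot => hz (hbot _ hz_mem)

theorem shiftIsoRel_of_unit_mem (h : IsGRing 𝒟) (u : Δˣ)
    (hu : ↑u ∈ 𝒟 (gv i0 * τ₂⁻¹ * τ₁ * (gv i0)⁻¹)) : ShiftIsoRel 𝒟 n gv i0 τ₁ τ₂ := by
  let e : (Fin n → Δ) ≃+ (Fin n → Δ) :=
    { toFun z i := z i * ↑u⁻¹
      invFun z i := z i * u
      left_inv z := by simp [mul_assoc]
      right_inv z := by simp [mul_assoc]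
      map_add' z w := funext fun i => add_mul (z i) (w i) _ }
  refine ⟨e, fun a z => ?_, fun σ z => ⟨fun hz i => ?_, fun hz i => ?_⟩⟩
  · funext i
    show a.mulVec z i * ↑u⁻¹ = a.mulVec (fun j => z j * ↑u⁻¹) i
    simp only [Matrix.mulVec, dotProduct, Finset.sum_mul, mul_assoc]
  · have hzu := h.2.1 _ _ _ _ (hz i) (h.inv_mem hu)
    rwa [show gv i * (σ * τ₁) * (gv i0)⁻¹ * (gv i0 * τ₂⁻¹ * τ₁ * (gv i0)⁻¹)⁻¹ =
      gv i * (σ * τ₂) * (gv i0)⁻¹ by group] at hzu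
  · have hzu := h.2.1 _ _ _ _ (show z i * ↑u⁻¹ ∈ _ from hz i) hu
    rwa [Units.inv_mul_cancel_right, show gv i * (σ * τ₂) * (gv i0)⁻¹ *
      (gv i0 * τ₂⁻¹ * τ₁ * (gv i0)⁻¹) = gv i * (σ * τ₁) * (gv i0)⁻¹ by group] at hzu

theorem shiftIsoRel_iff_ne_bot [Nontrivial Δ] (h𝒟 : IsGDivisionRing 𝒟) :
    ShiftIsoRel 𝒟 n gv i0 τ₁ τ₂ ↔ 𝒟 (gv i0 * τ₂⁻¹ * τ₁ * (gv i0)⁻¹) ≠ ⊥ := by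
  refine ⟨fun h => h.ne_bot h𝒟.1.1, fun hne => ?_⟩
  obtain ⟨d, hd, hd0⟩ : ∃ d ∈ 𝒟 (gv i0 * τ₂⁻¹ * τ₁ * (gv i0)⁻¹), d ≠ 0 := by
    simpa [AddSubgroup.eq_bot_iff_forall] using hne
  obtain ⟨u, rfl⟩ := h𝒟.2 _ d hd hd0
  exact shiftIsoRel_of_unit_mem h𝒟.1 u hd

end ColumnModule

/-- `Σ_1(τ) ≅ Σ_1` iff `τ ∈ g_1⁻¹·supp(Δ)·g_1`. -/
theorem shift_iso_column_module_iff_support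
    {Δ : Type*} [Ring Δ] [Nontrivial Δ] (𝒟 : G → AddSubgroup Δ)
    (h𝒟 : IsGDivisionRing 𝒟) (n : ℕ) (hn : 0 < n) (gv : Fin n → G) (τ : G) :
    ShiftIsoRel 𝒟 n gv ⟨0, hn⟩ τ 1 ↔
      gv ⟨0, hn⟩ * τ * (gv ⟨0, hn⟩)⁻¹ ∈ {σ : G | 𝒟 σ ≠ ⊥} := by
  simpa using shiftIsoRel_iff_ne_bot (i0 := ⟨0, hn⟩) (τ₁ := τ) (τ₂ := 1) h𝒟
end

section
/- Let A = M_n(Δ)(g_1,…,g_n) be a graded matrix ring over a graded division ring Δ. The number of isomorphism classes of graded simple left A-modules equals the index [G : supp(Δ)]. -/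
/-!
A graded isomorphism `Σ_1(τ₁) ≅ Σ_1(τ₂)` commutes with the matrix units, so it maps the column
vector `e_{i0}` into the image of `E_{i0 i0}`; as it is injective, the `i0`-th entry of the image
is a nonzero element of `Δ` of degree `g_{i0} τ₁⁻¹ τ₂ g_{i0}⁻¹`. Conversely, a nonzero homogeneous
`δ` of that degree is a unit whose inverse is homogeneous, so right multiplication by `δ` is such an
isomorphism. Hence the shifts `τ₁, τ₂` are identified exactly when conjugation by `g_{i0}` sends
`τ₁⁻¹ τ₂` into `supp Δ`, and conjugation by `g_{i0}` matches the two quotients of `G`.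
-/

open DirectSum

universe u v w

variable {G : Type u} [Group G] [DecidableEq G]
variable {R : Type v} [Ring R]

namespace IsGRing

variable {𝒜 : G → AddSubgroup R}

-- Mathlib's `GradedRing` is indexed by an additive monoid, hence `Additive G`.
noncomputable abbrev toGradedRing (h : IsGRing 𝒜) :
    GradedRing (fun a : Additive G => 𝒜 a.toMul) where
  one_mem := h.1
  mul_mem := fun _ _ _ _ => h.2.1 _ _ _ _
  __ := DirectSum.IsInternal.chooseDecomposition _ h.2.2

theorem inv_mem_s4 (h : IsGRing 𝒜) {d : G} {u : Rˣ} (hu : (u : R) ∈ 𝒜 d) :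
    ((u⁻¹ : Rˣ) : R) ∈ 𝒜 d⁻¹ := by
  let := h.toGradedRing
  let v := (DirectSum.decompose (fun a : Additive G => 𝒜 a.toMul) (u⁻¹ : Rˣ)
    (Additive.ofMul d⁻¹) : R)
  have huv : (u : R) * v = 1 := by
    rw [← DirectSum.coe_decompose_mul_add_of_left_mem (fun a : Additive G => 𝒜 a.toMul)
      (i := Additive.ofMul d) hu,
      Units.mul_inv, ← ofMul_mul, mul_inv_cancel, ofMul_one]
    exact DirectSum.decompose_of_mem_same (fun a : Additive G => 𝒜 a.toMul) h.1
  rw [Units.inv_eq_of_mul_eq_one_right huv]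
  exact SetLike.coe_mem _

theorem mul_unit_mem_iff (h : IsGRing 𝒜) {d g : G} {δ : Rˣ} (hδ : (δ : R) ∈ 𝒜 d) {x : R} :
    x * δ ∈ 𝒜 (g * d) ↔ x ∈ 𝒜 g := by
  refine ⟨fun hx => ?_, fun hx => h.2.1 _ _ _ _ hx hδ⟩
  simpa using h.2.1 _ _ _ _ hx (h.inv_mem_s4 hδ)

end IsGRing

theorem IsGDivisionRing.exists_unit_mem {Δ : Type*} [Ring Δ] {𝒟 : G → AddSubgroup Δ}
    (h : IsGDivisionRing 𝒟) {d : G} (hd : 𝒟 d ≠ ⊥) : ∃ δ : Δˣ, (δ : Δ) ∈ 𝒟 d := by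
  obtain ⟨δ, hδ, hδ0⟩ := (𝒟 d).bot_or_exists_ne_zero.resolve_left hd
  exact ⟨(h.2 d δ hδ hδ0).unit, hδ⟩

theorem ShiftIsoRel.conj_ne_bot {G : Type*} [Group G] {Δ : Type*} [Ring Δ] [Nontrivial Δ]
    {𝒟 : G → AddSubgroup Δ} {n : ℕ} {gv : Fin n → G} {i0 : Fin n} {τ₁ τ₂ : G}
    (hone : (1 : Δ) ∈ 𝒟 1) (h : ShiftIsoRel 𝒟 n gv i0 τ₁ τ₂) :
    𝒟 (MulAut.conj (gv i0) (τ₁⁻¹ * τ₂)) ≠ ⊥ := by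
  obtain ⟨e, he_mulVec, he_deg⟩ := h
  intro hbot
  set z : Fin n → Δ := Pi.single i0 1
  have hz : ∀ i, z i ∈ 𝒟 (gv i * (τ₁⁻¹ * τ₁) * (gv i0)⁻¹) := by
    intro i
    rcases eq_or_ne i i0 with rfl | hi
    · simpa [z] using hone
    · simp [z, hi]
  have hez_i0 : e z i0 = 0 := by
    have := (he_deg τ₁⁻¹ z).mp hz i0
    rwa [← MulAut.conj_apply, hbot, AddSubgroup.mem_bot] at this
  have hP : ∀ w : Fin n → Δ, (Matrix.single i0 i0 1).mulVec w = Pi.single i0 (w i0) := by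
    intro w
    rw [Matrix.single_mulVec_eq, one_mul, ← Pi.single_smul, smul_eq_mul, mul_one]
  have hPz : (Matrix.single i0 i0 (1 : Δ)).mulVec z = z := by
    rw [hP]; simp [z]
  have hez : e z = 0 := by
    rw [← hPz, he_mulVec, hP, hez_i0, Pi.single_zero]
  have hz0 : z = 0 := by simpa using hez
  simpa [z] using congrFun hz0 i0

section ShiftIsoRel

variable {Δ : Type*} [Ring Δ] {𝒟 : G → AddSubgroup Δ} {n : ℕ} {gv : Fin n → G} {i0 : Fin n}
  {τ₁ τ₂ : G}

theorem shiftIsoRel_of_conj_ne_bot (h𝒟 : IsGDivisionRing 𝒟)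
    (hd : 𝒟 (MulAut.conj (gv i0) (τ₁⁻¹ * τ₂)) ≠ ⊥) : ShiftIsoRel 𝒟 n gv i0 τ₁ τ₂ := by
  obtain ⟨δ, hδ⟩ := h𝒟.exists_unit_mem hd
  refine ⟨AddEquiv.piCongrRight fun _ => AddAut.mulRight δ, fun a z => ?_,
    fun σ z => forall_congr' fun i => ?_⟩
  · exact (Matrix.mulVec_smul a (MulOpposite.op (δ : Δ)) z).symm
  · have hdeg : gv i * (σ * τ₁) * (gv i0)⁻¹ * MulAut.conj (gv i0) (τ₁⁻¹ * τ₂) =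
        gv i * (σ * τ₂) * (gv i0)⁻¹ := by
      rw [MulAut.conj_apply]; group
    rw [← hdeg]
    exact (h𝒟.1.mul_unit_mem_iff hδ).symm

theorem shiftIsoRel_iff [Nontrivial Δ] (h𝒟 : IsGDivisionRing 𝒟) :
    ShiftIsoRel 𝒟 n gv i0 τ₁ τ₂ ↔ 𝒟 (MulAut.conj (gv i0) (τ₁⁻¹ * τ₂)) ≠ ⊥ :=
  ⟨ShiftIsoRel.conj_ne_bot h𝒟.1.1, shiftIsoRel_of_conj_ne_bot h𝒟⟩

end ShiftIsoRel

/-- since every graded simple left `A`-module is a shift `Σ_1(g)`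
of the column module `Σ_1`, the number of isomorphism classes of graded simple
left `A`-modules — i.e. the number of classes of shifts `Σ_1(g)` up to graded
isomorphism — equals the index `[G : supp(Δ)]`, i.e. the number of left cosets
of the support of `Δ`. -/
theorem card_iso_classes_of_graded_simples_eq_index_of_support
    {Δ : Type*} [Ring Δ] [Nontrivial Δ] (𝒟 : G → AddSubgroup Δ)
    (h𝒟 : IsGDivisionRing 𝒟) (n : ℕ) (hn : 0 < n) (gv : Fin n → G) :
    Nat.card (Quot (fun τ₁ τ₂ : G => ShiftIsoRel 𝒟 n gv ⟨0, hn⟩ τ₁ τ₂)) =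
      Nat.card (Quot (fun s t : G => s⁻¹ * t ∈ {σ : G | 𝒟 σ ≠ ⊥})) := by
  refine Nat.card_congr (Quot.congr (MulAut.conj (gv ⟨0, hn⟩)).toEquiv fun τ₁ τ₂ => ?_)
  rw [shiftIsoRel_iff h𝒟, map_mul, map_inv]
  rfl
end

section
/- Let R be a G-graded ring. The set Z^gr(R) = ⊕_g {x ∈ R_g : the left annihilator of x is an essential left ideal of R} is a two-sided graded ideal of R. -/
open DirectSum

universe u v w

variable {G : Type u} [Group G] [DecidableEq G]
variable {R : Type v} [Ring R]

/-!
If `x` is left-singular then so are `x * r` (as `ann x ≤ ann (x * r)`) and `r * x`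
(as `ann (r * x)` is the preimage of `ann x` under right multiplication by `r`, and preimages of
essential left ideals under endomorphisms of `R` are essential), and `ann x ⊓ ann y ≤ ann (x + y)`.
Homogeneity of the products is preserved when `r` is homogeneous, and homogeneous elements
generate `R` additively, so closure under products with homogeneous elements suffices.
-/

theorem AddSubgroup.apply_mem_closure_of_closure_eq_top {M N : Type*} [AddCommGroup M]
    [AddCommGroup N] (f : M →+ N →+ N) {A : Set M} {X : Set N} (hA : closure A = ⊤)
    (hAX : ∀ a ∈ A, ∀ x ∈ X, f a x ∈ closure X) (m : M) {y : N} (hy : y ∈ closure X) :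
    f m y ∈ closure X := by
  have hm : m ∈ closure A := hA ▸ mem_top m
  induction hm using closure_induction with
  | mem a ha =>
    induction hy using closure_induction with
    | mem x hx => exact hAX a ha x hx
    | zero => simp
    | add y z _ _ hy hz => simpa using add_mem hy hz
    | neg y _ hy => simpa using neg_mem hy
  | zero => simp
  | add a b _ _ ha hb => simpa using add_mem ha hb
  | neg a _ ha => simpa using neg_mem ha

theorem DirectSum.IsInternal.addSubgroup_closure_iUnion_eq_top {ι M : Type*} [DecidableEq ι]
    [AddCommGroup M] {𝒜 : ι → AddSubgroup M} (h : DirectSum.IsInternal 𝒜) :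
    AddSubgroup.closure (⋃ i, (𝒜 i : Set M)) = ⊤ := by
  refine (AddSubgroup.eq_top_iff' _).mpr fun m => ?_
  obtain ⟨z, rfl⟩ := h.surjective m
  induction z using DirectSum.induction_on with
  | zero => simp
  | of i a =>
    rw [DirectSum.coeAddMonoidHom_of]
    exact AddSubgroup.subset_closure (Set.mem_iUnion_of_mem i a.2)
  | add z w hz hw => simpa using add_mem hz hw

namespace IsEssentialLeftIdeal

theorem mono {I J : Submodule R R} (hI : IsEssentialLeftIdeal I) (hIJ : I ≤ J) :
    IsEssentialLeftIdeal J :=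
  fun K hK hJK => hI K hK (eq_bot_mono (inf_le_inf_right K hIJ) hJK)

theorem inf {I J : Submodule R R} (hI : IsEssentialLeftIdeal I) (hJ : IsEssentialLeftIdeal J) :
    IsEssentialLeftIdeal (I ⊓ J) :=
  fun K hK => by simpa only [inf_assoc] using hI _ (hJ K hK)

theorem comap {I : Submodule R R} (hI : IsEssentialLeftIdeal I) (f : R →ₗ[R] R) :
    IsEssentialLeftIdeal (I.comap f) := by
  intro J hJ
  by_cases hfJ : J.map f = ⊥
  · have hJI : J ≤ I.comap f := Submodule.map_le_iff_le_comap.mp (hfJ ▸ bot_le)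
    rwa [inf_eq_right.mpr hJI]
  · obtain ⟨_, ⟨hjI, j, hj, rfl⟩, hfj⟩ := (Submodule.ne_bot_iff _).mp (hI _ hfJ)
    exact (Submodule.ne_bot_iff _).mpr ⟨j, ⟨hjI, hj⟩, fun h0 => hfj (by simp [h0])⟩

end IsEssentialLeftIdeal

@[simp]
theorem mem_annLIdeal {x r : R} : r ∈ annLIdeal x ↔ r * x = 0 := Iff.rfl

theorem annLIdeal_mul (r x : R) :
    annLIdeal (r * x) = (annLIdeal x).comap (LinearMap.toSpanSingleton R R r) := by
  ext s
  simp [mul_assoc]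

theorem annLIdeal_le_annLIdeal_mul (x r : R) : annLIdeal x ≤ annLIdeal (x * r) :=
  fun s hs => by simp_all [← mul_assoc]

theorem annLIdeal_inf_le_annLIdeal_add (x y : R) :
    annLIdeal x ⊓ annLIdeal y ≤ annLIdeal (x + y) :=
  fun s ⟨hx, hy⟩ => by simp_all [mul_add]

theorem annLIdeal_neg (x : R) : annLIdeal (-x) = annLIdeal x := by
  ext s
  simp

section GradedSingular

variable {ι : Type*} {𝒜 : ι → AddSubgroup R} {g h : ι} {a x y : R}

theorem add_mem_grSingSet (hx : x ∈ grSingSet 𝒜 g) (hy : y ∈ grSingSet 𝒜 g) :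
    x + y ∈ grSingSet 𝒜 g :=
  ⟨add_mem hx.1 hy.1, (hx.2.inf hy.2).mono (annLIdeal_inf_le_annLIdeal_add x y)⟩

theorem neg_mem_grSingSet (hx : x ∈ grSingSet 𝒜 g) : -x ∈ grSingSet 𝒜 g :=
  ⟨neg_mem hx.1, (annLIdeal_neg x).symm ▸ hx.2⟩

theorem mul_mem_grSingSet_left [Mul ι]
    (hmul : ∀ (g h : ι) (a b : R), a ∈ 𝒜 g → b ∈ 𝒜 h → a * b ∈ 𝒜 (g * h))
    (ha : a ∈ 𝒜 h) (hx : x ∈ grSingSet 𝒜 g) : a * x ∈ grSingSet 𝒜 (h * g) :=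
  ⟨hmul h g a x ha hx.1, annLIdeal_mul a x ▸ hx.2.comap _⟩

theorem mul_mem_grSingSet_right [Mul ι]
    (hmul : ∀ (g h : ι) (a b : R), a ∈ 𝒜 g → b ∈ 𝒜 h → a * b ∈ 𝒜 (g * h))
    (hx : x ∈ grSingSet 𝒜 g) (ha : a ∈ 𝒜 h) : x * a ∈ grSingSet 𝒜 (g * h) :=
  ⟨hmul g h x a hx.1 ha, hx.2.mono (annLIdeal_le_annLIdeal_mul x a)⟩

theorem mul_mem_grSing_left [Mul ι] [DecidableEq ι]
    (hmul : ∀ (g h : ι) (a b : R), a ∈ 𝒜 g → b ∈ 𝒜 h → a * b ∈ 𝒜 (g * h))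
    (hint : DirectSum.IsInternal 𝒜) (r : R) (hx : x ∈ grSing 𝒜) : r * x ∈ grSing 𝒜 := by
  refine AddSubgroup.apply_mem_closure_of_closure_eq_top AddMonoidHom.mul
    hint.addSubgroup_closure_iUnion_eq_top ?_ r hx
  simp only [Set.mem_iUnion]
  rintro a ⟨h, ha⟩ y ⟨g, hy⟩
  exact AddSubgroup.subset_closure (Set.mem_iUnion_of_mem _ (mul_mem_grSingSet_left hmul ha hy))

theorem mul_mem_grSing_right [Mul ι] [DecidableEq ι]
    (hmul : ∀ (g h : ι) (a b : R), a ∈ 𝒜 g → b ∈ 𝒜 h → a * b ∈ 𝒜 (g * h))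
    (hint : DirectSum.IsInternal 𝒜) (r : R) (hx : x ∈ grSing 𝒜) : x * r ∈ grSing 𝒜 := by
  refine AddSubgroup.apply_mem_closure_of_closure_eq_top AddMonoidHom.mul.flip
    hint.addSubgroup_closure_iUnion_eq_top ?_ r hx
  simp only [Set.mem_iUnion]
  rintro a ⟨h, ha⟩ y ⟨g, hy⟩
  exact AddSubgroup.subset_closure (Set.mem_iUnion_of_mem _ (mul_mem_grSingSet_right hmul hy ha))

end GradedSingular

/-- `Z^gr(R) = ⊕_g Z^gr(R)_g` is a two-sided graded ideal: each
homogeneous piece is an additive subgroup, and the resulting graded additive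
subgroup is closed under left and right multiplication by arbitrary elements. -/
theorem graded_singular_is_graded_twosided_ideal
    (𝒜 : G → AddSubgroup R) (h𝒜 : IsGRing 𝒜) :
    (∀ g : G, ∀ x ∈ grSingSet 𝒜 g, ∀ y ∈ grSingSet 𝒜 g,
        x + y ∈ grSingSet 𝒜 g ∧ -x ∈ grSingSet 𝒜 g) ∧
    (∀ x ∈ grSing 𝒜, ∀ r : R, r * x ∈ grSing 𝒜 ∧ x * r ∈ grSing 𝒜) := by
  obtain ⟨-, hmul, hint⟩ := h𝒜
  exact ⟨fun _ _ hx _ hy => ⟨add_mem_grSingSet hx hy, neg_mem_grSingSet hx⟩,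
    fun _ hx r => ⟨mul_mem_grSing_left hmul hint r hx, mul_mem_grSing_right hmul hint r hx⟩⟩
end

section
/- Let R be a graded left Noetherian G-graded ring. Then the graded singular ideal Z^gr(R) is nilpotent. -/
open DirectSum

universe u v w

variable {G : Type u} [Group G] [DecidableEq G]
variable {R : Type v} [Ring R]

/-!
The left annihilators of the powers `S ^ k` of the set `S` of homogeneous singular elements
form an ascending chain of graded left ideals, which stabilises at some `n`. If `S ^ (n + 1)`
were nonzero, choose among the homogeneous `a` with `a * S ^ n ≠ 0` one whose annihilator is
maximal. For `z ∈ S`, if `a * z * S ^ n ≠ 0` then maximality gives `ann(a * z) = ann(a)`, and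
an element `r * a ≠ 0` of the essential left ideal `ann(z)` contradicts this. Hence
`a * S ^ (n + 1) = 0`, so `a` annihilates `S ^ n` by stability, a contradiction. Products of
`n + 1` elements of `Z^gr(R)`, the additive span of `S`, then lie in the span of `S ^ (n + 1)`.
-/

open Pointwise

theorem mem_iInf_annLIdeal {X : Set R} {r : R} :
    r ∈ ⨅ x ∈ X, annLIdeal x ↔ ∀ x ∈ X, r * x = 0 := by
  simp only [Submodule.mem_iInf]
  rfl

section Decomposition

variable {ι : Type*} [DecidableEq ι] {𝒜 : ι → AddSubgroup R} [Decomposition 𝒜]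

theorem isGradedLeftIdeal_of_isHomogeneous {I : Submodule R R}
    (hI : SetLike.IsHomogeneous 𝒜 I) : IsGradedLeftIdeal 𝒜 I := by
  classical
  refine le_antisymm (fun x hx => ?_) (Submodule.span_le.2 Set.inter_subset_left)
  rw [← sum_support_decompose 𝒜 x]
  exact Submodule.sum_mem _ fun g _ =>
    Submodule.subset_span ⟨hI g hx, Set.mem_iUnion.2 ⟨g, (decompose 𝒜 x g).2⟩⟩

theorem coe_decompose_mul_of_right_mem [Mul ι] [IsRightCancelMul ι]
    (hmul : ∀ (g h : ι) (a b : R), a ∈ 𝒜 g → b ∈ 𝒜 h → a * b ∈ 𝒜 (g * h))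
    {x : R} {d : ι} (hx : x ∈ 𝒜 d) (r : R) (g : ι) :
    (decompose 𝒜 (r * x) (g * d) : R) = decompose 𝒜 r g * x := by
  classical
  have hcomp : ∀ h, (decompose 𝒜 (decompose 𝒜 r h * x) (g * d) : R) =
      if h = g then decompose 𝒜 r g * x else 0 := by
    intro h
    have hmem := hmul h d _ _ (decompose 𝒜 r h).2 hx
    split_ifs with hhg
    · rw [hhg] at hmem ⊢
      exact decompose_of_mem_same 𝒜 hmem
    · exact decompose_of_mem_ne 𝒜 hmem (mt mul_right_cancel hhg)
  conv_lhs => rw [← sum_support_decompose 𝒜 r]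
  rw [Finset.sum_mul, decompose_sum, DFinsupp.finsetSum_apply, AddSubgroup.val_finsetSum]
  simp only [hcomp, Finset.sum_ite_eq']
  split_ifs with hg
  · rfl
  · rw [DFinsupp.notMem_support_iff.1 hg, ZeroMemClass.coe_zero, zero_mul]

theorem isHomogeneous_iInf_annLIdeal [Mul ι] [IsRightCancelMul ι]
    (hmul : ∀ (g h : ι) (a b : R), a ∈ 𝒜 g → b ∈ 𝒜 h → a * b ∈ 𝒜 (g * h))
    {X : Set R} (hX : ∀ x ∈ X, SetLike.IsHomogeneousElem 𝒜 x) :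
    SetLike.IsHomogeneous 𝒜 (⨅ x ∈ X, annLIdeal x) := by
  intro g r hr
  refine mem_iInf_annLIdeal.2 fun x hx => ?_
  obtain ⟨d, hd⟩ := hX x hx
  rw [← coe_decompose_mul_of_right_mem hmul hd, mem_iInf_annLIdeal.1 hr x hx, decompose_zero]
  rfl

end Decomposition

section GradedAnnihilator

variable {ι : Type*} [DecidableEq ι] [Mul ι] [IsRightCancelMul ι] {𝒜 : ι → AddSubgroup R}

theorem isGradedLeftIdeal_iInf_annLIdeal (hint : IsInternal 𝒜)
    (hmul : ∀ (g h : ι) (a b : R), a ∈ 𝒜 g → b ∈ 𝒜 h → a * b ∈ 𝒜 (g * h))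
    {X : Set R} (hX : ∀ x ∈ X, SetLike.IsHomogeneousElem 𝒜 x) :
    IsGradedLeftIdeal 𝒜 (⨅ x ∈ X, annLIdeal x) :=
  letI := hint.chooseDecomposition
  isGradedLeftIdeal_of_isHomogeneous (isHomogeneous_iInf_annLIdeal hmul hX)

theorem isGradedLeftIdeal_annLIdeal_s6 (hint : IsInternal 𝒜)
    (hmul : ∀ (g h : ι) (a b : R), a ∈ 𝒜 g → b ∈ 𝒜 h → a * b ∈ 𝒜 (g * h))
    {a : R} (ha : SetLike.IsHomogeneousElem 𝒜 a) : IsGradedLeftIdeal 𝒜 (annLIdeal a) := by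
  simpa only [iInf_singleton] using
    isGradedLeftIdeal_iInf_annLIdeal hint hmul (X := {a}) (by simpa using ha)

end GradedAnnihilator

theorem GrLeftNoetherian.exists_maximal {ι : Type*} {𝒜 : ι → AddSubgroup R}
    (hnoeth : GrLeftNoetherian 𝒜) {F : Set (Submodule R R)}
    (hF : ∀ I ∈ F, IsGradedLeftIdeal 𝒜 I) (hne : F.Nonempty) : ∃ I, Maximal (· ∈ F) I := by
  have hwf : WellFoundedGT {I : Submodule R R // IsGradedLeftIdeal 𝒜 I} :=
    wellFoundedGT_iff_monotone_chain_condition.2 fun f => by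
      obtain ⟨n, hn⟩ := hnoeth (fun k => (f k).1) (fun k => (f k).2) f.monotone
      exact ⟨n, fun m hm => Subtype.ext (hn m hm).symm⟩
  obtain ⟨I, hI⟩ := hne
  obtain ⟨J, hJ⟩ :=
    hwf.exists_maximal {J : {I : Submodule R R // IsGradedLeftIdeal 𝒜 I} | J.1 ∈ F}
      ⟨⟨I, hF I hI⟩, hI⟩
  exact ⟨J.1, hJ.1, fun K hK hJK => hJ.2 (y := ⟨K, hF K hK⟩) hK hJK⟩

theorem eq_zero_of_annLIdeal_mul_le {a z : R} (hz : IsEssentialLeftIdeal (annLIdeal z))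
    (h : annLIdeal (a * z) ≤ annLIdeal a) : a = 0 := by
  by_contra ha
  obtain ⟨y, ⟨hyz, hya⟩, hy⟩ :=
    (Submodule.ne_bot_iff _).1 (hz _ (mt Submodule.span_singleton_eq_bot.1 ha))
  obtain ⟨r, rfl⟩ := Submodule.mem_span_singleton.1 hya
  have hr : r ∈ annLIdeal (a * z) := by
    change r * (a * z) = 0
    rw [← mul_assoc]
    exact hyz
  exact hy (h hr)

theorem monotone_iInf_annLIdeal_pow (S : Set R) :
    Monotone fun k : ℕ => ⨅ x ∈ S ^ k, annLIdeal x := by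
  refine monotone_nat_of_le_succ fun k r hr => mem_iInf_annLIdeal.2 fun x hx => ?_
  rw [pow_succ] at hx
  obtain ⟨y, hy, s, -, rfl⟩ := Set.mem_mul.1 hx
  rw [← mul_assoc, mem_iInf_annLIdeal.1 hr y hy, zero_mul]

theorem isHomogeneousElem_of_mem_pow {ι : Type*} [Monoid ι] {𝒜 : ι → AddSubgroup R}
    (h1 : (1 : R) ∈ 𝒜 1) (hmul : ∀ (g h : ι) (a b : R), a ∈ 𝒜 g → b ∈ 𝒜 h → a * b ∈ 𝒜 (g * h))
    {S : Set R} (hS : ∀ x ∈ S, SetLike.IsHomogeneousElem 𝒜 x) :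
    ∀ k : ℕ, ∀ x ∈ S ^ k, SetLike.IsHomogeneousElem 𝒜 x
  | 0, x, hx => by
    rw [pow_zero, Set.mem_one] at hx
    exact hx ▸ ⟨1, h1⟩
  | k + 1, x, hx => by
    rw [pow_succ] at hx
    obtain ⟨y, hy, s, hs, rfl⟩ := Set.mem_mul.1 hx
    obtain ⟨g, hg⟩ := isHomogeneousElem_of_mem_pow h1 hmul hS k y hy
    obtain ⟨h, hh⟩ := hS s hs
    exact ⟨g * h, hmul g h y s hg hh⟩

theorem mul_subset_zero_of_iInf_annLIdeal_le {ι : Type*} [DecidableEq ι] [Mul ι]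
    [IsRightCancelMul ι] {𝒜 : ι → AddSubgroup R} (hint : IsInternal 𝒜)
    (hmul : ∀ (g h : ι) (a b : R), a ∈ 𝒜 g → b ∈ 𝒜 h → a * b ∈ 𝒜 (g * h))
    (hnoeth : GrLeftNoetherian 𝒜) {S T : Set R}
    (hS : ∀ z ∈ S, SetLike.IsHomogeneousElem 𝒜 z ∧ IsEssentialLeftIdeal (annLIdeal z))
    (hle : ⨅ x ∈ S * T, annLIdeal x ≤ ⨅ x ∈ T, annLIdeal x) : S * T ⊆ {0} := by
  set C := ⨅ x ∈ T, annLIdeal x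
  set P := {b : R | SetLike.IsHomogeneousElem 𝒜 b ∧ b ∉ C}
  intro v hv
  by_contra hv0
  obtain ⟨z, hz, w, hw, rfl⟩ := Set.mem_mul.1 hv
  have hzP : z ∈ P := ⟨(hS z hz).1, fun hzC => hv0 (mem_iInf_annLIdeal.1 hzC w hw)⟩
  obtain ⟨_, ⟨a, ⟨ha, haC⟩, rfl⟩, hmax⟩ := hnoeth.exists_maximal (F := annLIdeal '' P)
    (by rintro _ ⟨b, hb, rfl⟩; exact isGradedLeftIdeal_annLIdeal_s6 hint hmul hb.1)
    ⟨_, z, hzP, rfl⟩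
  have haS : ∀ z' ∈ S, a * z' ∈ C := by
    intro z' hz'
    by_contra haz'
    obtain ⟨⟨g, hg⟩, ⟨h, hh⟩, hz'ess⟩ := And.intro ha (hS z' hz')
    have hann : annLIdeal a ≤ annLIdeal (a * z') := fun r (hr : r * a = 0) =>
      show r * (a * z') = 0 by rw [← mul_assoc, hr, zero_mul]
    have ha0 : a = 0 := eq_zero_of_annLIdeal_mul_le hz'ess
      (hmax ⟨a * z', ⟨⟨g * h, hmul g h a z' hg hh⟩, haz'⟩, rfl⟩ hann)
    exact haC (ha0 ▸ C.zero_mem)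
  refine haC (hle (mem_iInf_annLIdeal.2 fun x hx => ?_))
  obtain ⟨z', hz', w', hw', rfl⟩ := Set.mem_mul.1 hx
  rw [← mul_assoc]
  exact mem_iInf_annLIdeal.1 (haS z' hz') w' hw'

theorem Submodule.list_prod_mem_pow {K A : Type*} [CommSemiring K] [Semiring A] [Algebra K A]
    {M : Submodule K A} : ∀ {l : List A}, (∀ x ∈ l, x ∈ M) → l.prod ∈ M ^ l.length
  | [], _ => by
    rw [List.prod_nil, List.length_nil, pow_zero]
    exact Submodule.one_le.1 le_rfl
  | x :: l, hl => by
    rw [List.prod_cons, List.length_cons, pow_succ']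
    exact Submodule.mul_mem_mul (hl x List.mem_cons_self)
      (list_prod_mem_pow fun y hy => hl y (List.mem_cons_of_mem x hy))

theorem list_prod_eq_zero_of_pow_subset_zero {S : Set R} {m : ℕ} (hS : S ^ m ⊆ {0})
    {l : List R} (hl : ∀ x ∈ l, x ∈ AddSubgroup.closure S) (hlen : l.length = m) :
    l.prod = 0 := by
  have hspan : ∀ x ∈ l, x ∈ Submodule.span ℤ S := fun x hx => by
    rw [← Submodule.mem_toAddSubgroup, Submodule.span_int_eq_addSubgroupClosure]
    exact hl x hx
  have hprod := Submodule.list_prod_mem_pow hspan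
  rw [hlen, Submodule.span_pow] at hprod
  exact (Submodule.mem_bot ℤ).1 (Submodule.span_le.2 (hS.trans (by simp)) hprod)

/-- over a graded left Noetherian graded ring, the graded singular
ideal is nilpotent: there is `m > 0` such that every product of `m` elements of
`Z^gr(R)` vanishes. -/
theorem graded_singular_nilpotent_of_graded_left_noetherian
    (𝒜 : G → AddSubgroup R) (h𝒜 : IsGRing 𝒜) (hnoeth : GrLeftNoetherian 𝒜) :
    ∃ m : ℕ, 0 < m ∧
      ∀ l : List R, (∀ x ∈ l, x ∈ grSing 𝒜) → l.length = m → l.prod = 0 := by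
  obtain ⟨h1, hmul, hint⟩ := h𝒜
  set S := ⋃ g, grSingSet 𝒜 g
  have hS : ∀ z ∈ S, SetLike.IsHomogeneousElem 𝒜 z ∧ IsEssentialLeftIdeal (annLIdeal z) := by
    intro z hz
    obtain ⟨g, hzg, hess⟩ := Set.mem_iUnion.1 hz
    exact ⟨⟨g, hzg⟩, hess⟩
  obtain ⟨n, hn⟩ := hnoeth (fun k => ⨅ x ∈ S ^ k, annLIdeal x)
    (fun k => isGradedLeftIdeal_iInf_annLIdeal hint hmul
      (isHomogeneousElem_of_mem_pow h1 hmul (fun z hz => (hS z hz).1) k))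
    (monotone_iInf_annLIdeal_pow S)
  have hzero : S ^ (n + 1) ⊆ {0} := by
    rw [pow_succ']
    refine mul_subset_zero_of_iInf_annLIdeal_le hint hmul hnoeth hS ?_
    rw [← pow_succ', hn (n + 1) n.le_succ]
  exact ⟨n + 1, n.succ_pos, fun l hl hlen => list_prod_eq_zero_of_pow_subset_zero hzero hl hlen⟩
end

section
/- Let R be a G-graded ring which is injective as an object of the category of graded left R-modules. Then the graded singular ideal Z^gr(R) equals the graded Jacobson radical J^gr(R), and R/J^gr(R) is graded von Neumann regular. -/
open DirectSum

universe u v w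

variable {G : Type u} [Group G] [DecidableEq G]
variable {R : Type v} [Ring R]

/-!
Everything rests on the graded Baer criterion in the following form: if `x` is homogeneous of
degree `g` and a graded left ideal `L` meets `ann_ℓ(x)` trivially, then `l x ↦ l` is a graded
morphism `L x → R` of degree `g⁻¹`, so some homogeneous `u` satisfies `l x u = l` on `L`.

`Z^gr ⊆ J^gr`: if a homogeneous singular `z` avoids a maximal graded `M`, then `1 = m + r z`, and
in degree `1` this says `1 - y ∈ M` with `y = r_{g⁻¹} z` singular of degree `1`. Then `1 - y` has
zero left annihilator, Baer with `L = R` makes it right invertible, and applying this again to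
the right inverse makes it a unit, which is impossible in `M`.

`J^gr ⊆ Z^gr`: for homogeneous `x ∈ J^gr` and `L` as above, `l x (1 - u x) = 0`, and `1 - u x` is
a unit because `u x ∈ J^gr` has degree `1`; so `L = 0`. Testing essentiality against graded `L`
suffices, since left multiplication by homogeneous elements removes the components of a nonzero
element outside a graded left ideal one at a time.

Regularity: take a graded `K` maximal with `K ∩ ann_ℓ(a) = 0` and `u` with `k a u = k` on `K`;
then `a - a u a` is annihilated by the essential left ideal `ann_ℓ(a) ⊕ K`.
-/

section Homogeneous

variable {ι M : Type*} [DecidableEq ι] [AddCommGroup M] [Module R M]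
  {ℳ : ι → AddSubgroup M} [Decomposition ℳ]

theorem mem_of_forall_ne_decompose_eq_zero {x : M} {i : ι}
    (h : ∀ j ≠ i, (decompose ℳ x j : M) = 0) : x ∈ ℳ i := by
  classical
  rw [← sum_support_decompose ℳ x]
  refine sum_mem fun j _ => ?_
  by_cases hj : j = i
  · exact hj ▸ (decompose ℳ x j).2
  · rw [h j hj]
    exact zero_mem _

theorem exists_decompose_ne_zero {x : M} (hx : x ≠ 0) : ∃ i, (decompose ℳ x i : M) ≠ 0 := by
  by_contra! h
  exact hx ((decompose ℳ).injective (by ext i; simp [h i]))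

@[simp]
theorem coe_decompose_add (x y : M) (i : ι) :
    (decompose ℳ (x + y) i : M) = decompose ℳ x i + decompose ℳ y i := by
  rw [decompose_add, DirectSum.add_apply, AddMemClass.coe_add]

variable (ℳ) in
open Classical in
noncomputable def degreesOutside (N : Submodule R M) (x : M) : Finset ι :=
  {i ∈ (decompose ℳ x).support | (decompose ℳ x i : M) ∉ N}

theorem mem_degreesOutside {N : Submodule R M} {x : M} {i : ι} :
    i ∈ degreesOutside ℳ N x ↔ (decompose ℳ x i : M) ∉ N := by
  classical
  simp only [degreesOutside, Finset.mem_filter, DFinsupp.mem_support_iff, and_iff_right_iff_imp]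
  exact fun h h0 => h (by rw [h0]; exact N.zero_mem)

namespace DirectSum.SetLike.IsHomogeneous

theorem bot : SetLike.IsHomogeneous ℳ (⊥ : Submodule R M) := fun i x hx => by
  simp [(Submodule.mem_bot R).mp hx]

theorem top : SetLike.IsHomogeneous ℳ (⊤ : Submodule R M) := fun _ _ _ => trivial

theorem sup {p q : Submodule R M} (hp : SetLike.IsHomogeneous ℳ p)
    (hq : SetLike.IsHomogeneous ℳ q) : SetLike.IsHomogeneous ℳ (p ⊔ q) := fun i x hx => by
  obtain ⟨y, hy, z, hz, rfl⟩ := Submodule.mem_sup.mp hx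
  rw [coe_decompose_add]
  exact Submodule.add_mem_sup (hp i hy) (hq i hz)

theorem sSup {S : Set (Submodule R M)} (hS : ∀ p ∈ S, SetLike.IsHomogeneous ℳ p) :
    SetLike.IsHomogeneous ℳ (sSup S) := fun i x hx => by
  rw [sSup_eq_iSup'] at hx ⊢
  refine Submodule.iSup_induction _ (motive := fun y => (decompose ℳ y i : M) ∈ _) hx
    (fun p y hy => Submodule.mem_iSup_of_mem p (hS p p.2 i hy)) (by simp) fun y z hy hz => ?_
  rw [coe_decompose_add]
  exact add_mem hy hz

theorem sInf {S : Set (Submodule R M)} (hS : ∀ p ∈ S, SetLike.IsHomogeneous ℳ p) :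
    SetLike.IsHomogeneous ℳ (sInf S) := fun i _ hx =>
  Submodule.mem_sInf.mpr fun p hp => hS p hp i (Submodule.mem_sInf.mp hx p hp)

end DirectSum.SetLike.IsHomogeneous

end Homogeneous

namespace IsGRing

variable {𝒜 : G → AddSubgroup R}

theorem one_mem (h𝒜 : IsGRing 𝒜) : (1 : R) ∈ 𝒜 1 := h𝒜.1

theorem mul_mem (h𝒜 : IsGRing 𝒜) {g h : G} {a b : R} (ha : a ∈ 𝒜 g) (hb : b ∈ 𝒜 h) :
    a * b ∈ 𝒜 (g * h) :=
  h𝒜.2.1 g h a b ha hb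

end IsGRing

namespace IsGRing

variable {𝒜 : G → AddSubgroup R} [Decomposition 𝒜]

theorem coe_decompose_mul_of_right_mem (h𝒜 : IsGRing 𝒜) {g : G} {b : R} (hb : b ∈ 𝒜 g)
    (a : R) (k : G) : (decompose 𝒜 (a * b) k : R) = decompose 𝒜 a (k * g⁻¹) * b := by
  induction a using Decomposition.inductionOn 𝒜 with
  | zero => simp
  | @homogeneous i a =>
    have hab : (a : R) * b ∈ 𝒜 (i * g) := h𝒜.mul_mem a.2 hb
    by_cases hi : i = k * g⁻¹
    · subst hi
      rw [inv_mul_cancel_right] at hab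
      rw [decompose_of_mem_same _ a.2, decompose_of_mem_same _ hab]
    · rw [decompose_of_mem_ne _ a.2 hi, zero_mul,
        decompose_of_mem_ne _ hab fun h => hi (eq_mul_inv_of_mul_eq h)]
  | add a a' ha ha' =>
    rw [add_mul, coe_decompose_add, coe_decompose_add, ha, ha', add_mul]

theorem coe_decompose_mul_of_left_mem (h𝒜 : IsGRing 𝒜) {g : G} {a : R} (ha : a ∈ 𝒜 g)
    (b : R) (k : G) : (decompose 𝒜 (a * b) k : R) = a * decompose 𝒜 b (g⁻¹ * k) := by
  induction b using Decomposition.inductionOn 𝒜 with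
  | zero => simp
  | @homogeneous i b =>
    have hab : a * (b : R) ∈ 𝒜 (g * i) := h𝒜.mul_mem ha b.2
    by_cases hi : i = g⁻¹ * k
    · subst hi
      rw [mul_inv_cancel_left] at hab
      rw [decompose_of_mem_same _ b.2, decompose_of_mem_same _ hab]
    · rw [decompose_of_mem_ne _ b.2 hi, mul_zero,
        decompose_of_mem_ne _ hab fun h => hi (eq_inv_mul_of_mul_eq h)]
  | add b b' hb hb' =>
    rw [mul_add, coe_decompose_add, coe_decompose_add, hb, hb', mul_add]

theorem isGradedLeftIdeal_iff (h𝒜 : IsGRing 𝒜) {I : Submodule R R} :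
    IsGradedLeftIdeal 𝒜 I ↔ SetLike.IsHomogeneous 𝒜 I := by
  refine ⟨fun hI => ?_, fun hI => le_antisymm (fun x hx => ?_) ?_⟩
  · suffices h : ∀ x ∈ I, ∀ g, (decompose 𝒜 x g : R) ∈ I from fun g x hx => h x hx g
    intro x hx
    rw [hI] at hx
    induction hx using Submodule.span_induction with
    | mem y hy =>
      obtain ⟨hyI, hy⟩ := hy
      obtain ⟨i, hyi⟩ := Set.mem_iUnion.mp hy
      intro g
      by_cases hi : i = g
      · rwa [← hi, decompose_of_mem_same _ hyi]
      · rw [decompose_of_mem_ne _ hyi hi]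
        exact I.zero_mem
    | zero => simp
    | add y z _ _ hy hz =>
      intro g
      rw [coe_decompose_add]
      exact I.add_mem (hy g) (hz g)
    | smul r y _ hy =>
      induction r using Decomposition.inductionOn 𝒜 with
      | zero => simp
      | @homogeneous i r =>
        intro g
        rw [smul_eq_mul, h𝒜.coe_decompose_mul_of_left_mem r.2]
        exact I.smul_mem _ (hy _)
      | add r r' hr hr' =>
        intro g
        rw [add_smul, coe_decompose_add]
        exact I.add_mem (hr g) (hr' g)
  · classical
    rw [← sum_support_decompose 𝒜 x]
    exact Submodule.sum_mem _ fun g _ =>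
      Submodule.subset_span ⟨hI g hx, Set.mem_iUnion_of_mem g (decompose 𝒜 x g).2⟩
  · rw [Submodule.span_le]
    exact Set.inter_subset_left

theorem isHomogeneous_map_toSpanSingleton (h𝒜 : IsGRing 𝒜) {g : G} {x : R} (hx : x ∈ 𝒜 g)
    {L : Submodule R R} (hL : SetLike.IsHomogeneous 𝒜 L) :
    SetLike.IsHomogeneous 𝒜 (L.map (LinearMap.toSpanSingleton R R x)) := by
  rintro k _ ⟨l, hl, rfl⟩
  rw [LinearMap.toSpanSingleton_apply, smul_eq_mul, h𝒜.coe_decompose_mul_of_right_mem hx]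
  exact ⟨_, hL _ hl, rfl⟩

theorem isHomogeneous_span_singleton (h𝒜 : IsGRing 𝒜) {g : G} {x : R} (hx : x ∈ 𝒜 g) :
    SetLike.IsHomogeneous 𝒜 (Submodule.span R {x}) := by
  rw [LinearMap.span_singleton_eq_range, ← Submodule.map_top]
  exact h𝒜.isHomogeneous_map_toSpanSingleton hx SetLike.IsHomogeneous.top

theorem isHomogeneous_annLIdeal (h𝒜 : IsGRing 𝒜) {g : G} {x : R} (hx : x ∈ 𝒜 g) :
    SetLike.IsHomogeneous 𝒜 (annLIdeal x) := fun k a (ha : a * x = 0) => by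
  change (decompose 𝒜 a k : R) * x = 0
  rw [← mul_inv_cancel_right k g, ← h𝒜.coe_decompose_mul_of_right_mem hx, ha]
  simp

end IsGRing

theorem annLIdeal_le_mul_right (x y : R) : annLIdeal x ≤ annLIdeal (x * y) :=
  fun a (ha : a * x = 0) => show a * (x * y) = 0 by rw [← mul_assoc, ha, zero_mul]

namespace IsEssentialLeftIdeal

theorem mono_s7 {E F : Submodule R R} (hE : IsEssentialLeftIdeal E) (hEF : E ≤ F) :
    IsEssentialLeftIdeal F := fun J hJ hFJ =>
  hE J hJ (eq_bot_iff.mpr (hFJ ▸ inf_le_inf_right J hEF))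

theorem comap_toSpanSingleton {E : Submodule R R} (hE : IsEssentialLeftIdeal E) (r : R) :
    IsEssentialLeftIdeal (E.comap (LinearMap.toSpanSingleton R R r)) := by
  intro J hJ
  by_cases hJr : J.map (LinearMap.toSpanSingleton R R r) = ⊥
  · have hJE : J ≤ E.comap (LinearMap.toSpanSingleton R R r) :=
      Submodule.map_le_iff_le_comap.mp (hJr ▸ bot_le)
    rwa [inf_eq_right.mpr hJE]
  · obtain ⟨_, ⟨hyE, j, hj, rfl⟩, hy0⟩ := (Submodule.ne_bot_iff _).mp (hE _ hJr)
    exact (Submodule.ne_bot_iff _).mpr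
      ⟨j, ⟨hyE, hj⟩, fun h => hy0 (by rw [h, map_zero])⟩

theorem annLIdeal_mul {z : R} (hz : IsEssentialLeftIdeal (annLIdeal z)) (r : R) :
    IsEssentialLeftIdeal (annLIdeal (r * z)) :=
  (hz.comap_toSpanSingleton r).mono_s7 fun a (ha : a * r * z = 0) => by
    change a * (r * z) = 0
    rw [← mul_assoc, ha]

end IsEssentialLeftIdeal

namespace IsGRing

variable {𝒜 : G → AddSubgroup R} [Decomposition 𝒜]

theorem card_degreesOutside_mul_lt (h𝒜 : IsGRing 𝒜) {N : Submodule R R} {d g : G} {r x : R}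
    (hr : r ∈ 𝒜 d) (hxg : (decompose 𝒜 x g : R) ∉ N) (hrxg : r * decompose 𝒜 x g ∈ N) :
    (degreesOutside 𝒜 N (r * x)).card < (degreesOutside 𝒜 N x).card := by
  have hsub :
      (degreesOutside 𝒜 N (r * x)).image (d⁻¹ * ·) ⊆ (degreesOutside 𝒜 N x).erase g := by
    simp only [Finset.subset_iff, Finset.mem_image, Finset.mem_erase, mem_degreesOutside,
      h𝒜.coe_decompose_mul_of_left_mem hr]
    rintro _ ⟨k, hk, rfl⟩
    exact ⟨fun h => hk (h ▸ hrxg), fun h => hk (N.smul_mem r h)⟩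
  calc (degreesOutside 𝒜 N (r * x)).card
      = ((degreesOutside 𝒜 N (r * x)).image (d⁻¹ * ·)).card :=
        (Finset.card_image_of_injective _ (mul_right_injective d⁻¹)).symm
    _ < (degreesOutside 𝒜 N x).card := Finset.card_lt_card
        (hsub.trans_ssubset (Finset.erase_ssubset (mem_degreesOutside.mpr hxg)))

theorem exists_mul_mem_ne_zero (h𝒜 : IsGRing 𝒜) {N : Submodule R R}
    (hN : SetLike.IsHomogeneous 𝒜 N)
    (hNess : ∀ L, SetLike.IsHomogeneous 𝒜 L → L ≠ ⊥ → N ⊓ L ≠ ⊥)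
    {g : G} {z : R} (hz : z ∈ 𝒜 g) (hz0 : z ≠ 0) :
    ∃ d, ∃ r ∈ 𝒜 d, r * z ∈ N ∧ r * z ≠ 0 := by
  have hspan : Submodule.span R {z} ≠ ⊥ := by
    rwa [Ne, Submodule.span_singleton_eq_bot]
  obtain ⟨y, ⟨hyN, hyz⟩, hy0⟩ :=
    (Submodule.ne_bot_iff _).mp (hNess _ (h𝒜.isHomogeneous_span_singleton hz) hspan)
  obtain ⟨t, rfl⟩ := Submodule.mem_span_singleton.mp hyz
  obtain ⟨k, hk⟩ := exists_decompose_ne_zero (ℳ := 𝒜) hy0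
  rw [smul_eq_mul, h𝒜.coe_decompose_mul_of_right_mem hz] at hk
  refine ⟨_, _, (decompose 𝒜 t (k * g⁻¹)).2, ?_, hk⟩
  rw [← h𝒜.coe_decompose_mul_of_right_mem hz]
  exact hN k hyN

theorem isEssentialLeftIdeal_of_isHomogeneous (h𝒜 : IsGRing 𝒜) {N : Submodule R R}
    (hN : SetLike.IsHomogeneous 𝒜 N)
    (hNess : ∀ L, SetLike.IsHomogeneous 𝒜 L → L ≠ ⊥ → N ⊓ L ≠ ⊥) :
    IsEssentialLeftIdeal N := by
  intro P hP
  obtain ⟨x, hxP, hx0⟩ := (Submodule.ne_bot_iff P).mp hP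
  induction hn : (degreesOutside 𝒜 N x).card using Nat.strong_induction_on generalizing x with
  | _ n ih =>
  obtain hout | ⟨g, hg⟩ := (degreesOutside 𝒜 N x).eq_empty_or_nonempty
  · have hxN : x ∈ N := (AddSubmonoidClass.IsHomogeneous.mem_iff 𝒜 N hN).mpr fun g => by
      by_contra h
      simpa [hout] using mem_degreesOutside.mpr h
    exact (Submodule.ne_bot_iff _).mpr ⟨x, ⟨hxN, hxP⟩, hx0⟩
  rw [mem_degreesOutside] at hg
  obtain ⟨d, r, hr, hrN, hr0⟩ := h𝒜.exists_mul_mem_ne_zero hN hNess (decompose 𝒜 x g).2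
    fun h => hg (h ▸ N.zero_mem)
  refine ih _ (hn ▸ h𝒜.card_degreesOutside_mul_lt hr hg hrN) (r * x) (P.smul_mem r hxP)
    (fun h => hr0 ?_) rfl
  -- the component of `r * x` in degree `d * g` is `r * x_g`
  rw [← inv_mul_cancel_left d g, ← h𝒜.coe_decompose_mul_of_left_mem hr, h]
  simp

theorem mem_of_mul_mem_of_disjoint (h𝒜 : IsGRing 𝒜) {g k : G} {x l : R} (hx : x ∈ 𝒜 g)
    {L : Submodule R R} (hL : SetLike.IsHomogeneous 𝒜 L) (hLx : Disjoint L (annLIdeal x))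
    (hl : l ∈ L) (hlx : l * x ∈ 𝒜 k) : l ∈ 𝒜 (k * g⁻¹) := by
  refine mem_of_forall_ne_decompose_eq_zero fun t ht => ?_
  refine Submodule.disjoint_def.mp hLx _ (hL t hl) ?_
  change (decompose 𝒜 l t : R) * x = 0
  rw [← mul_inv_cancel_right t g, ← h𝒜.coe_decompose_mul_of_right_mem hx,
    decompose_of_mem_ne _ hlx fun h => ht (eq_mul_inv_of_mul_eq h.symm)]

theorem exists_mul_mul_eq_of_disjoint (h𝒜 : IsGRing 𝒜) (hinj : GrLeftSelfInjective 𝒜)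
    {g : G} {x : R} (hx : x ∈ 𝒜 g) {L : Submodule R R} (hL : SetLike.IsHomogeneous 𝒜 L)
    (hLx : Disjoint L (annLIdeal x)) : ∃ u ∈ 𝒜 g⁻¹, ∀ l ∈ L, l * x * u = l := by
  set φ : L →ₗ[R] R := (LinearMap.toSpanSingleton R R x).comp L.subtype
  have hφ : Function.Injective φ := by
    rw [← LinearMap.ker_eq_bot, eq_bot_iff]
    exact fun l hl => (Submodule.mk_eq_zero _ _).mpr (Submodule.disjoint_def.mp hLx _ l.2 hl)
  have hrange : SetLike.IsHomogeneous 𝒜 (LinearMap.range φ) := by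
    rw [LinearMap.range_comp, Submodule.range_subtype]
    exact h𝒜.isHomogeneous_map_toSpanSingleton hx hL
  -- Baer's criterion applies to the inverse `l * x ↦ l`, which has degree `g⁻¹`.
  set e := LinearEquiv.ofInjective φ hφ
  have he : ∀ l : L, (e l : R) = l * x := fun _ => rfl
  obtain ⟨u, hu, hfu⟩ := hinj _ (h𝒜.isGradedLeftIdeal_iff.mpr hrange) g⁻¹
    (L.subtype ∘ₗ e.symm.toLinearMap) fun k y hy => by
      rw [← e.apply_symm_apply y, he] at hy
      exact h𝒜.mem_of_mul_mem_of_disjoint hx hL hLx (e.symm y).2 hy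
  refine ⟨u, hu, fun l hl => ?_⟩
  simpa [he] using (hfu (e ⟨l, hl⟩)).symm

theorem exists_one_sub_mul_eq_one_of_isEssentialLeftIdeal (h𝒜 : IsGRing 𝒜)
    (hinj : GrLeftSelfInjective 𝒜) {y : R} (hy : y ∈ 𝒜 1) (hess : IsEssentialLeftIdeal (annLIdeal y)) :
    ∃ u ∈ 𝒜 1, (1 - y) * u = 1 := by
  have hann : annLIdeal (1 - y) = ⊥ := by
    by_contra h
    obtain ⟨a, ⟨hay, ha1y⟩, ha0⟩ := (Submodule.ne_bot_iff _).mp (hess _ h)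
    change a * y = 0 at hay
    change a * (1 - y) = 0 at ha1y
    rw [mul_sub, mul_one, hay, sub_zero] at ha1y
    exact ha0 ha1y
  obtain ⟨u, hu, hlu⟩ := h𝒜.exists_mul_mul_eq_of_disjoint hinj (sub_mem h𝒜.one_mem hy)
    SetLike.IsHomogeneous.top (by rw [hann]; exact disjoint_bot_right)
  rw [inv_one] at hu
  exact ⟨u, hu, by simpa using hlu 1 trivial⟩

theorem isUnit_one_sub_of_isEssentialLeftIdeal (h𝒜 : IsGRing 𝒜) (hinj : GrLeftSelfInjective 𝒜)
    {y : R} (hy : y ∈ 𝒜 1) (hess : IsEssentialLeftIdeal (annLIdeal y)) : IsUnit (1 - y) := by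
  obtain ⟨u, hu, hyu⟩ := h𝒜.exists_one_sub_mul_eq_one_of_isEssentialLeftIdeal hinj hy hess
  -- `u = 1 - y * (-u)` where `y * (-u)` is again singular of degree `1`
  have hu' : 1 - y * -u = u := by rw [← hyu]; noncomm_ring
  obtain ⟨v, -, huv⟩ := h𝒜.exists_one_sub_mul_eq_one_of_isEssentialLeftIdeal hinj
    (y := y * -u) (by simpa using h𝒜.mul_mem hy (neg_mem hu))
    (hess.mono_s7 (annLIdeal_le_mul_right y _))
  rw [hu'] at huv
  have hv : 1 - y = v := left_inv_eq_right_inv hyu huv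
  exact ⟨⟨1 - y, u, hyu, by rw [hv, huv]⟩, rfl⟩

theorem mem_of_mem_grSingSet_of_isMaxGradedLeftIdeal (h𝒜 : IsGRing 𝒜)
    (hinj : GrLeftSelfInjective 𝒜) {g : G} {z : R} (hz : z ∈ grSingSet 𝒜 g) {M : Submodule R R}
    (hM : IsMaxGradedLeftIdeal 𝒜 M) : z ∈ M := by
  obtain ⟨hzg, hzess⟩ := hz
  by_contra hzM
  have hMh : SetLike.IsHomogeneous 𝒜 M := h𝒜.isGradedLeftIdeal_iff.mp hM.1
  have hMz : M < M ⊔ Submodule.span R {z} :=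
    left_lt_sup.mpr fun h => hzM (h (Submodule.mem_span_singleton_self z))
  have htop := hM.2.2 _
    (h𝒜.isGradedLeftIdeal_iff.mpr (hMh.sup (h𝒜.isHomogeneous_span_singleton hzg))) hMz
  obtain ⟨m, hm, _, hrz, hmrz⟩ := Submodule.mem_sup.mp (htop ▸ Submodule.mem_top (x := (1 : R)))
  obtain ⟨r, rfl⟩ := Submodule.mem_span_singleton.mp hrz
  -- in degree `1`: `1 = m₁ + r_{g⁻¹} z`, and `r_{g⁻¹} z` is singular of degree `1`
  have h1 := congrArg (fun x => (decompose 𝒜 x 1 : R)) hmrz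
  simp only [coe_decompose_add, smul_eq_mul, h𝒜.coe_decompose_mul_of_right_mem hzg,
    decompose_of_mem_same _ h𝒜.one_mem] at h1
  rw [one_mul] at h1
  have hy : decompose 𝒜 r g⁻¹ * z ∈ 𝒜 1 := by simpa using h𝒜.mul_mem (decompose 𝒜 r g⁻¹).2 hzg
  exact hM.2.1 (Ideal.eq_top_of_isUnit_mem M (eq_sub_of_add_eq h1 ▸ hMh 1 hm)
    (h𝒜.isUnit_one_sub_of_isEssentialLeftIdeal hinj hy (hzess.annLIdeal_mul _)))

theorem isHomogeneous_grJacobson (h𝒜 : IsGRing 𝒜) : SetLike.IsHomogeneous 𝒜 (grJacobson 𝒜) :=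
  SetLike.IsHomogeneous.sInf fun _ hM => h𝒜.isGradedLeftIdeal_iff.mp hM.1

theorem exists_isMaxGradedLeftIdeal_le (h𝒜 : IsGRing 𝒜) {I : Submodule R R}
    (hI : SetLike.IsHomogeneous 𝒜 I) (hItop : I ≠ ⊤) :
    ∃ M, IsMaxGradedLeftIdeal 𝒜 M ∧ I ≤ M := by
  have hchain : ∀ c ⊆ {J : Submodule R R | SetLike.IsHomogeneous 𝒜 J ∧ J ≠ ⊤},
      IsChain (· ≤ ·) c → ∀ J ∈ c,
        ∃ ub ∈ {J : Submodule R R | SetLike.IsHomogeneous 𝒜 J ∧ J ≠ ⊤}, ∀ K ∈ c, K ≤ ub := by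
    intro c hc hchain J hJ
    refine ⟨sSup c, ⟨.sSup fun K hK => (hc hK).1, fun htop => ?_⟩, fun _ => le_sSup⟩
    obtain ⟨K, hK, h1⟩ := (Submodule.mem_sSup_of_directed ⟨J, hJ⟩ hchain.directedOn).mp
      (htop ▸ Submodule.mem_top (x := (1 : R)))
    exact (hc hK).2 (Ideal.eq_top_of_isUnit_mem K h1 isUnit_one)
  obtain ⟨M, hIM, ⟨hM, hMtop⟩, hmax⟩ := zorn_le_nonempty₀ _ hchain I ⟨hI, hItop⟩
  refine ⟨M, ⟨h𝒜.isGradedLeftIdeal_iff.mpr hM, hMtop, fun J hJ hMJ => ?_⟩, hIM⟩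
  by_contra hJtop
  exact hMJ.not_ge (hmax ⟨h𝒜.isGradedLeftIdeal_iff.mp hJ, hJtop⟩ hMJ.le)

theorem exists_mul_one_sub_eq_one_of_mem_grJacobson (h𝒜 : IsGRing 𝒜) {y : R}
    (hy : y ∈ grJacobson 𝒜) (hy1 : y ∈ 𝒜 1) : ∃ w ∈ 𝒜 1, w * (1 - y) = 1 := by
  have h1y : 1 - y ∈ 𝒜 1 := sub_mem h𝒜.one_mem hy1
  have hspan : Submodule.span R {1 - y} = ⊤ := by
    by_contra hne
    obtain ⟨M, hM, hyM⟩ :=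
      h𝒜.exists_isMaxGradedLeftIdeal_le (h𝒜.isHomogeneous_span_singleton h1y) hne
    have h1 : (1 : R) ∈ M := by
      simpa using M.add_mem (hyM (Submodule.mem_span_singleton_self _))
        (Submodule.mem_sInf.mp hy M hM)
    exact hM.2.1 (Ideal.eq_top_of_isUnit_mem M h1 isUnit_one)
  obtain ⟨s, hs⟩ := Submodule.mem_span_singleton.mp (hspan ▸ Submodule.mem_top (x := (1 : R)))
  have hs1 := congrArg (fun x => (decompose 𝒜 x 1 : R)) hs
  simp only [smul_eq_mul, h𝒜.coe_decompose_mul_of_right_mem h1y,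
    decompose_of_mem_same _ h𝒜.one_mem] at hs1
  rw [inv_one, mul_one] at hs1
  exact ⟨_, (decompose 𝒜 s 1).2, hs1⟩

theorem isUnit_one_sub_of_mem_grJacobson (h𝒜 : IsGRing 𝒜) {y : R} (hy : y ∈ grJacobson 𝒜)
    (hy1 : y ∈ 𝒜 1) : IsUnit (1 - y) := by
  obtain ⟨w, hw, hwy⟩ := h𝒜.exists_mul_one_sub_eq_one_of_mem_grJacobson hy hy1
  have hw' : 1 - -w * y = w := by rw [← hwy]; noncomm_ring
  obtain ⟨v, -, hvw⟩ := h𝒜.exists_mul_one_sub_eq_one_of_mem_grJacobson (y := -w * y)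
    ((grJacobson 𝒜).smul_mem (-w) hy) (by simpa using h𝒜.mul_mem (neg_mem hw) hy1)
  rw [hw'] at hvw
  have hv : v = 1 - y := left_inv_eq_right_inv hvw hwy
  exact ⟨⟨1 - y, w, by rw [← hv, hvw], hwy⟩, rfl⟩

theorem isEssentialLeftIdeal_annLIdeal_of_mem_grJacobson (h𝒜 : IsGRing 𝒜)
    (hinj : GrLeftSelfInjective 𝒜) {g : G} {x : R} (hx : x ∈ grJacobson 𝒜) (hxg : x ∈ 𝒜 g) :
    IsEssentialLeftIdeal (annLIdeal x) := by
  refine h𝒜.isEssentialLeftIdeal_of_isHomogeneous (h𝒜.isHomogeneous_annLIdeal hxg)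
    fun L hL hL0 hxL => hL0 ?_
  have hLx : Disjoint L (annLIdeal x) := by rw [disjoint_iff, inf_comm, hxL]
  obtain ⟨u, hu, hlu⟩ := h𝒜.exists_mul_mul_eq_of_disjoint hinj hxg hL hLx
  have hux : IsUnit (1 - u * x) := h𝒜.isUnit_one_sub_of_mem_grJacobson
    ((grJacobson 𝒜).smul_mem u hx) (by simpa using h𝒜.mul_mem hu hxg)
  refine eq_bot_iff.mpr fun l hl => Submodule.disjoint_def.mp hLx l hl ?_
  change l * x = 0
  rw [← hux.mul_left_eq_zero, mul_sub, mul_one, ← mul_assoc, hlu l hl, sub_self]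

theorem exists_disjoint_isEssentialLeftIdeal_sup (h𝒜 : IsGRing 𝒜) {N : Submodule R R}
    (hN : SetLike.IsHomogeneous 𝒜 N) :
    ∃ K, SetLike.IsHomogeneous 𝒜 K ∧ Disjoint K N ∧ IsEssentialLeftIdeal (N ⊔ K) := by
  have hchain : ∀ c ⊆ {K : Submodule R R | SetLike.IsHomogeneous 𝒜 K ∧ Disjoint K N},
      IsChain (· ≤ ·) c → ∀ J ∈ c,
        ∃ ub ∈ {K : Submodule R R | SetLike.IsHomogeneous 𝒜 K ∧ Disjoint K N},
        ∀ K ∈ c, K ≤ ub := fun c hc hchain _ _ =>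
    ⟨sSup c, ⟨.sSup fun K hK => (hc hK).1,
      hchain.directedOn.disjoint_sSup_left.mpr fun K hK => (hc hK).2⟩, fun _ => le_sSup⟩
  obtain ⟨K, -, ⟨hK, hKN⟩, hmax⟩ := zorn_le_nonempty₀ _ hchain ⊥ ⟨.bot, disjoint_bot_left⟩
  refine ⟨K, hK, hKN, h𝒜.isEssentialLeftIdeal_of_isHomogeneous (hN.sup hK)
    fun L hL hL0 hNKL => hL0 (eq_bot_iff.mpr ?_)⟩
  have hKL : K ⊔ L ≤ K := hmax ⟨hK.sup hL,
    (hKN.symm.disjoint_sup_right_of_disjoint_sup_left (disjoint_iff.mpr hNKL)).symm⟩ le_sup_left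
  exact hNKL ▸ le_inf (le_sup_right.trans (hKL.trans le_sup_right)) le_rfl

theorem exists_sub_mul_mul_mem_grSingSet (h𝒜 : IsGRing 𝒜) (hinj : GrLeftSelfInjective 𝒜)
    {g : G} {a : R} (ha : a ∈ 𝒜 g) : ∃ b, a - a * b * a ∈ grSingSet 𝒜 g := by
  obtain ⟨K, hK, hKa, hess⟩ :=
    h𝒜.exists_disjoint_isEssentialLeftIdeal_sup (h𝒜.isHomogeneous_annLIdeal ha)
  obtain ⟨u, hu, hku⟩ := h𝒜.exists_mul_mul_eq_of_disjoint hinj ha hK hKa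
  refine ⟨u, sub_mem ha (by simpa using h𝒜.mul_mem (h𝒜.mul_mem ha hu) ha),
    hess.mono_s7 (sup_le (fun t (ht : t * a = 0) => ?_) fun k hk => ?_)⟩
  · change t * (a - a * u * a) = 0
    rw [mul_sub, ← mul_assoc, ← mul_assoc, ht, zero_mul, zero_mul, sub_zero]
  · change k * (a - a * u * a) = 0
    rw [mul_sub, ← mul_assoc, ← mul_assoc, hku k hk, sub_self]

theorem grSing_subset_grJacobson (h𝒜 : IsGRing 𝒜) (hinj : GrLeftSelfInjective 𝒜) :
    (grSing 𝒜 : Set R) ⊆ grJacobson 𝒜 :=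
  (AddSubgroup.closure_le (K := (grJacobson 𝒜).toAddSubgroup)).mpr <| Set.iUnion_subset
    fun _ _ hz => Submodule.mem_sInf.mpr fun _ hM =>
      h𝒜.mem_of_mem_grSingSet_of_isMaxGradedLeftIdeal hinj hz hM

theorem grJacobson_subset_grSing (h𝒜 : IsGRing 𝒜) (hinj : GrLeftSelfInjective 𝒜) :
    (grJacobson 𝒜 : Set R) ⊆ grSing 𝒜 := by
  classical
  intro x hx
  rw [SetLike.mem_coe, ← sum_support_decompose 𝒜 x]
  exact sum_mem fun g _ => AddSubgroup.subset_closure <| Set.mem_iUnion_of_mem g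
    ⟨(decompose 𝒜 x g).2, h𝒜.isEssentialLeftIdeal_annLIdeal_of_mem_grJacobson hinj
      (h𝒜.isHomogeneous_grJacobson g hx) (decompose 𝒜 x g).2⟩

end IsGRing

/-- if `R` is graded left self-injective then the graded singular
ideal equals the graded Jacobson radical, and `R/J^gr(R)` is graded von Neumann
regular (every homogeneous `a` satisfies `a = aba` modulo `J^gr(R)`). -/
theorem graded_singular_eq_graded_jacobson_of_graded_self_injective
    (𝒜 : G → AddSubgroup R) (h𝒜 : IsGRing 𝒜) (hinj : GrLeftSelfInjective 𝒜) :
    (grSing 𝒜 : Set R) = (grJacobson 𝒜 : Set R) ∧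
    ∀ (g : G) (a : R), a ∈ 𝒜 g → ∃ b : R, a - a * b * a ∈ grJacobson 𝒜 := by
  let := h𝒜.2.2.chooseDecomposition
  have hsing : (grSing 𝒜 : Set R) = grJacobson 𝒜 :=
    (h𝒜.grSing_subset_grJacobson hinj).antisymm (h𝒜.grJacobson_subset_grSing hinj)
  refine ⟨hsing, fun g a ha => ?_⟩
  obtain ⟨b, hb⟩ := h𝒜.exists_sub_mul_mul_mem_grSingSet hinj ha
  exact ⟨b, hsing.subset (AddSubgroup.subset_closure (Set.mem_iUnion_of_mem g hb))⟩
end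

section
/- Let R be a G-graded ring and a ∈ R_g a homogeneous element. Then the left ideal Ra is a direct summand of R as a graded left R-module if and only if there exists b ∈ R_{g^{-1}} with a = aba. -/
open DirectSum

universe u v w

variable {G : Type u} [Group G] [DecidableEq G]
variable {R : Type v} [Ring R]

/-! If `R = Ra ⊕ I`, write `1 = ba + z` with `z ∈ I`: then `a - aba = az` lies in `Ra ∩ I = 0`.
Since `a` has degree `g`, comparing degree-`g` components of `a = aba` lets one replace `b` by its
component of degree `g⁻¹`. Conversely, if `a = aba` with `b ∈ R_{g⁻¹}`, then `e = ba` is an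
idempotent with `Ra = Re`, so `R = Ra ⊕ R(1 - e)`, and `R(1 - e)` is graded because `1 - e` is
homogeneous of degree `1`. -/

theorem IsIdempotentElem.ker_toSpanSingleton_eq_span_one_sub {e : R} (he : IsIdempotentElem e) :
    LinearMap.ker (LinearMap.toSpanSingleton R R e) = Submodule.span R {1 - e} := by
  ext x
  rw [LinearMap.mem_ker, LinearMap.toSpanSingleton_apply, smul_eq_mul,
    Submodule.mem_span_singleton]
  constructor
  · intro hx
    exact ⟨x, by rw [smul_eq_mul, mul_sub, hx, mul_one, sub_zero]⟩
  · rintro ⟨y, rfl⟩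
    rw [smul_eq_mul, mul_assoc, sub_mul, one_mul, he.eq, sub_self, mul_zero]

theorem IsIdempotentElem.isCompl_span_singleton_one_sub {e : R} (he : IsIdempotentElem e) :
    IsCompl (Submodule.span R {e}) (Submodule.span R {1 - e}) := by
  rw [← LinearMap.range_toSpanSingleton, ← he.ker_toSpanSingleton_eq_span_one_sub]
  exact LinearMap.IsIdempotentElem.isCompl (LinearMap.toSpanSingleton_isIdempotentElem_iff.mpr he)

theorem isIdempotentElem_mul_of_eq_mul_mul {a b : R} (hab : a = a * b * a) :
    IsIdempotentElem (b * a) := by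
  rw [IsIdempotentElem, mul_assoc, ← mul_assoc a, ← hab]

theorem span_singleton_eq_span_mul_of_eq_mul_mul {a b : R} (hab : a = a * b * a) :
    Submodule.span R {a} = Submodule.span R {b * a} := by
  refine le_antisymm ?_ ?_ <;>
    rw [Submodule.span_singleton_le_iff_mem, Submodule.mem_span_singleton]
  · exact ⟨a, by rw [smul_eq_mul, ← mul_assoc, ← hab]⟩
  · exact ⟨b, rfl⟩

theorem exists_eq_mul_mul_of_isCompl_span_singleton {a : R} {I : Submodule R R}
    (h : IsCompl (Submodule.span R {a}) I) : ∃ b, a = a * b * a := by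
  have hone : (1 : R) ∈ Submodule.span R {a} ⊔ I := h.sup_eq_top ▸ Submodule.mem_top
  obtain ⟨y, hy, z, hz, hyz⟩ := Submodule.mem_sup.mp hone
  obtain ⟨b, rfl⟩ := Submodule.mem_span_singleton.mp hy
  refine ⟨b, sub_eq_zero.mp ?_⟩
  have hdiff : a - a * b * a = a * z := by
    calc a - a * b * a = a * (b • a + z) - a * b * a := by rw [hyz, mul_one]
      _ = a * z := by rw [smul_eq_mul]; noncomm_ring
  have hleft : a - a * b * a ∈ Submodule.span R {a} :=
    Submodule.mem_span_singleton.mpr ⟨1 - a * b, by rw [smul_eq_mul, sub_mul, one_mul]⟩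
  have hright : a - a * b * a ∈ I := hdiff ▸ I.smul_mem a hz
  exact (Submodule.disjoint_def.mp h.disjoint) _ hleft hright

theorem isGradedLeftIdeal_span_singleton {ι : Type*} (𝒜 : ι → AddSubgroup R) {x : R} {i : ι}
    (hx : x ∈ 𝒜 i) : IsGradedLeftIdeal 𝒜 (Submodule.span R {x}) := by
  refine le_antisymm (Submodule.span_le.mpr ?_) (Submodule.span_le.mpr Set.inter_subset_left)
  rw [Set.singleton_subset_iff]
  exact Submodule.subset_span ⟨Submodule.mem_span_singleton_self x, Set.mem_iUnion.mpr ⟨i, hx⟩⟩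

theorem coe_decompose_mul_mul_of_mem {ι : Type*} [Mul ι] [IsCancelMul ι] [DecidableEq ι]
    (𝒜 : ι → AddSubgroup R) [Decomposition 𝒜]
    (hmul : ∀ (i j : ι) (x y : R), x ∈ 𝒜 i → y ∈ 𝒜 j → x * y ∈ 𝒜 (i * j))
    {a c : R} {i j : ι} (ha : a ∈ 𝒜 i) (hc : c ∈ 𝒜 j) (x : R) (k : ι) :
    (decompose 𝒜 (a * x * c) (i * k * j) : R) = a * decompose 𝒜 x k * c := by
  induction x using Decomposition.inductionOn 𝒜 with
  | zero => simp
  | @homogeneous l y =>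
    have hy := hmul _ _ _ _ (hmul _ _ _ _ ha y.2) hc
    by_cases hk : l = k
    · subst hk
      rw [decompose_coe, of_eq_same, decompose_of_mem_same 𝒜 hy]
    · have hne : i * l * j ≠ i * k * j := fun h => hk (mul_left_cancel (mul_right_cancel h))
      rw [decompose_coe, of_eq_of_ne _ _ _ (Ne.symm hk), decompose_of_mem_ne 𝒜 hy hne]
      simp
  | add x y hx hy => simp [mul_add, add_mul, hx, hy]

theorem exists_mem_inv_eq_mul_mul_of_eq_mul_mul {ι : Type*} [Group ι] [DecidableEq ι]
    {𝒜 : ι → AddSubgroup R} (hmul : ∀ (i j : ι) (x y : R), x ∈ 𝒜 i → y ∈ 𝒜 j → x * y ∈ 𝒜 (i * j))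
    (hint : DirectSum.IsInternal 𝒜) {a b : R} {g : ι} (ha : a ∈ 𝒜 g) (hab : a = a * b * a) :
    ∃ b' ∈ 𝒜 g⁻¹, a = a * b' * a := by
  let := hint.chooseDecomposition
  refine ⟨decompose 𝒜 b g⁻¹, SetLike.coe_mem _, ?_⟩
  calc a = decompose 𝒜 (a * b * a) (g * g⁻¹ * g) := by
        rw [← hab, mul_inv_cancel, one_mul, decompose_of_mem_same 𝒜 ha]
    _ = a * decompose 𝒜 b g⁻¹ * a := coe_decompose_mul_mul_of_mem 𝒜 hmul ha ha b g⁻¹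

/-- for homogeneous `a ∈ R_g`, the left ideal `Ra` is a direct
summand of `R` as a graded left module iff `a = aba` for some `b ∈ R_{g⁻¹}`. -/
theorem span_singleton_isCompl_iff_regular_element
    (𝒜 : G → AddSubgroup R) (h𝒜 : IsGRing 𝒜) (g : G) (a : R) (ha : a ∈ 𝒜 g) :
    (∃ I : Submodule R R, IsGradedLeftIdeal 𝒜 I ∧ IsCompl (Submodule.span R {a}) I) ↔
      ∃ b ∈ 𝒜 g⁻¹, a = a * b * a := by
  obtain ⟨hone, hmul, hint⟩ := h𝒜
  constructor
  · rintro ⟨I, -, hI⟩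
    obtain ⟨b, hab⟩ := exists_eq_mul_mul_of_isCompl_span_singleton hI
    exact exists_mem_inv_eq_mul_mul_of_eq_mul_mul hmul hint ha hab
  · rintro ⟨b, hb, hab⟩
    have hba : b * a ∈ 𝒜 1 := inv_mul_cancel g ▸ hmul _ _ _ _ hb ha
    refine ⟨_, isGradedLeftIdeal_span_singleton 𝒜 (sub_mem hone hba), ?_⟩
    rw [span_singleton_eq_span_mul_of_eq_mul_mul hab]
    exact (isIdempotentElem_mul_of_eq_mul_mul hab).isCompl_span_singleton_one_sub
end

section
/- Let R be a G-graded ring which is graded left injective. Then for any two graded left ideals U and V of R, one has ann_r(U) + ann_r(V) = ann_r(U ∩ V). -/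
open DirectSum

universe u v w

variable {G : Type u} [Group G] [DecidableEq G]
variable {R : Type v} [Ring R]

/-! If `r` annihilates `U ⊓ V`, so does each homogeneous component of `r`, because `U ⊓ V` is
graded; hence it suffices to treat a homogeneous `s` of degree `σ`. Then `u + v ↦ u * s` is a
well-defined morphism `U + V → R` of degree `σ`, so by graded self-injectivity it is right
multiplication by some `m`; thus `s - m` kills `U`, `m` kills `V`, and `s = (s - m) + m`. -/

open Pointwise

def IsMulGraded (𝒜 : G → AddSubgroup R) : Prop :=
  ∀ (g h : G) (a b : R), a ∈ 𝒜 g → b ∈ 𝒜 h → a * b ∈ 𝒜 (g * h)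

theorem IsGradedLeftIdeal.sup {ι : Type*} {𝒜 : ι → AddSubgroup R} {I J : Submodule R R}
    (hI : IsGradedLeftIdeal 𝒜 I) (hJ : IsGradedLeftIdeal 𝒜 J) : IsGradedLeftIdeal 𝒜 (I ⊔ J) := by
  refine le_antisymm (sup_le ?_ ?_) (Submodule.span_le.mpr Set.inter_subset_left)
  · exact (Eq.le hI).trans <| Submodule.span_mono <|
      Set.inter_subset_inter_left _ (SetLike.coe_subset_coe.mpr le_sup_left)
  · exact (Eq.le hJ).trans <| Submodule.span_mono <|
      Set.inter_subset_inter_left _ (SetLike.coe_subset_coe.mpr le_sup_right)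

theorem Submodule.IsHomogeneous.inf {ι M σ : Type*} [DecidableEq ι] [AddCommMonoid M]
    [Module R M] [SetLike σ M] [AddSubmonoidClass σ M] {ℳ : ι → σ} [Decomposition ℳ]
    {p q : Submodule R M} (hp : p.IsHomogeneous ℳ) (hq : q.IsHomogeneous ℳ) :
    (p ⊓ q).IsHomogeneous ℳ :=
  fun i _ hx => ⟨hp i hx.1, hq i hx.2⟩

def annRAddSubgroup (X : Set R) : AddSubgroup R where
  carrier := annRset X
  add_mem' ha hb x hx := by rw [mul_add, ha x hx, hb x hx, add_zero]
  zero_mem' x _ := mul_zero x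
  neg_mem' ha x hx := by rw [mul_neg, ha x hx, neg_zero]

theorem coe_annRAddSubgroup_sup (X Y : Set R) :
    ((annRAddSubgroup X ⊔ annRAddSubgroup Y : AddSubgroup R) : Set R) = annRset X + annRset Y :=
  Set.ext fun _ => AddSubgroup.mem_sup.trans Set.mem_add.symm

theorem annRset_add_annRset_subset (X Y : Set R) : annRset X + annRset Y ⊆ annRset (X ∩ Y) := by
  rintro _ ⟨a, ha, b, hb, rfl⟩ x hx
  rw [mul_add, ha x hx.1, hb x hx.2, add_zero]

/-- The map `u + v ↦ u * s` on `U ⊔ V`, well defined because `s` kills `U ⊓ V`. -/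
noncomputable def supMulRight (U V : Submodule R R) (s : R) (hs : s ∈ annRset ↑(U ⊓ V)) :
    ↥(U ⊔ V) →ₗ[R] R :=
  ((LinearMap.toSpanSingleton R R s).toPMap U |>.sup ((0 : R →ₗ[R] R).toPMap V)
    fun x y hxy => hs x ⟨x.2, hxy ▸ y.2⟩).toFun

theorem supMulRight_apply {U V : Submodule R R} {s : R} (hs : s ∈ annRset ↑(U ⊓ V)) {u v : R}
    (hu : u ∈ U) (hv : v ∈ V) (x : ↥(U ⊔ V)) (hx : u + v = x) :
    supMulRight U V s hs x = u * s := by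
  have := LinearPMap.sup_apply (f := (LinearMap.toSpanSingleton R R s).toPMap U)
    (g := (0 : R →ₗ[R] R).toPMap V) (fun x y hxy => hs x ⟨x.2, hxy ▸ y.2⟩) ⟨u, hu⟩ ⟨v, hv⟩ x hx
  exact this.trans (show u • s + 0 = u * s by rw [add_zero, smul_eq_mul])

theorem mem_annRset_add_of_supMulRight_eq_mul {U V : Submodule R R} {s : R}
    (hs : s ∈ annRset ↑(U ⊓ V)) (m : R) (hm : ∀ x, supMulRight U V s hs x = x * m) :
    s ∈ annRset (U : Set R) + annRset (V : Set R) := by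
  refine ⟨s - m, fun u hu => ?_, m, fun v hv => ?_, sub_add_cancel s m⟩
  · rw [mul_sub, ← supMulRight_apply hs hu V.zero_mem ⟨u, Submodule.mem_sup_left hu⟩ (add_zero u),
      hm, sub_self]
  · rw [← hm ⟨v, Submodule.mem_sup_right hv⟩,
      supMulRight_apply hs U.zero_mem hv _ (zero_add v), zero_mul]

section Graded

variable {𝒜 : G → AddSubgroup R} [Decomposition 𝒜]

theorem coe_decompose_mul_of_left_mem_mul (hmul : IsMulGraded 𝒜) {g : G} {a : R} (ha : a ∈ 𝒜 g)
    (x : R) (τ : G) : (decompose 𝒜 (a * x) (g * τ) : R) = a * decompose 𝒜 x τ := by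
  induction x using Decomposition.inductionOn 𝒜 with
  | zero => simp
  | @homogeneous i m =>
    by_cases hi : i = τ
    · subst hi
      rw [decompose_of_mem_same 𝒜 (hmul _ _ _ _ ha m.2), decompose_of_mem_same 𝒜 m.2]
    · rw [decompose_of_mem_ne 𝒜 (hmul _ _ _ _ ha m.2) (mt mul_left_cancel hi),
        decompose_of_mem_ne 𝒜 m.2 hi, mul_zero]
  | add x y hx hy =>
    rw [mul_add, decompose_add, DirectSum.add_apply, AddMemClass.coe_add, hx, hy, decompose_add,
      DirectSum.add_apply, AddMemClass.coe_add, mul_add]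

theorem IsGradedLeftIdeal.isHomogeneous (hmul : IsMulGraded 𝒜) {I : Submodule R R}
    (hI : IsGradedLeftIdeal 𝒜 I) : I.IsHomogeneous 𝒜 := by
  intro g x hx
  rw [hI] at hx
  induction hx using Submodule.span_induction generalizing g with
  | mem s hs =>
    obtain ⟨hsI, hs⟩ := hs
    obtain ⟨h, hsh⟩ := Set.mem_iUnion.mp hs
    by_cases hg : h = g
    · rwa [← hg, decompose_of_mem_same 𝒜 hsh]
    · rw [decompose_of_mem_ne 𝒜 hsh hg]
      exact I.zero_mem
  | zero => simp
  | add x y _ _ hx hy =>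
    rw [decompose_add, DirectSum.add_apply, AddMemClass.coe_add]
    exact I.add_mem (hx g) (hy g)
  | smul a x _ hx =>
    induction a using Decomposition.inductionOn 𝒜 with
    | zero => simp
    | @homogeneous h a =>
      rw [smul_eq_mul, ← mul_inv_cancel_left h g, coe_decompose_mul_of_left_mem_mul hmul a.2]
      exact I.smul_mem _ (hx _)
    | add a b ha hb =>
      rw [add_smul, decompose_add, DirectSum.add_apply, AddMemClass.coe_add]
      exact I.add_mem ha hb

theorem decompose_mem_annRset (hmul : IsMulGraded 𝒜) {I : Submodule R R}
    (hI : I.IsHomogeneous 𝒜) {r : R} (hr : r ∈ annRset (I : Set R)) (σ : G) :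
    (decompose 𝒜 r σ : R) ∈ annRset (I : Set R) := by
  classical
  intro w hw
  rw [← sum_support_decompose 𝒜 w, Finset.sum_mul]
  refine Finset.sum_eq_zero fun g _ => ?_
  rw [← coe_decompose_mul_of_left_mem_mul hmul (decompose 𝒜 w g).2, hr _ (hI g hw),
    decompose_zero, DirectSum.zero_apply, ZeroMemClass.coe_zero]

theorem supMulRight_mem (hmul : IsMulGraded 𝒜) {U V : Submodule R R} (hU : U.IsHomogeneous 𝒜)
    (hV : V.IsHomogeneous 𝒜) {σ : G} {s : R} (hsσ : s ∈ 𝒜 σ) (hs : s ∈ annRset ↑(U ⊓ V))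
    {g : G} (x : ↥(U ⊔ V)) (hx : (x : R) ∈ 𝒜 g) : supMulRight U V s hs x ∈ 𝒜 (g * σ) := by
  obtain ⟨u, hu, v, hv, huv⟩ := Submodule.mem_sup.mp x.2
  have hx_eq : (decompose 𝒜 u g : R) + decompose 𝒜 v g = x := by
    rw [← AddMemClass.coe_add, ← DirectSum.add_apply, ← decompose_add, huv,
      decompose_of_mem_same 𝒜 hx]
  rw [supMulRight_apply hs (hU g hu) (hV g hv) x hx_eq]
  exact hmul _ _ _ _ (decompose 𝒜 u g).2 hsσ

theorem mem_annRset_add_annRset_of_homogeneous (hmul : IsMulGraded 𝒜)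
    (hinj : GrLeftSelfInjective 𝒜) {U V : Submodule R R} (hU : IsGradedLeftIdeal 𝒜 U)
    (hV : IsGradedLeftIdeal 𝒜 V) {σ : G} {s : R} (hsσ : s ∈ 𝒜 σ)
    (hs : s ∈ annRset ↑(U ⊓ V)) : s ∈ annRset (U : Set R) + annRset (V : Set R) := by
  obtain ⟨m, -, hm⟩ := hinj (U ⊔ V) (hU.sup hV) σ (supMulRight U V s hs) fun _ x hx =>
    supMulRight_mem hmul (hU.isHomogeneous hmul) (hV.isHomogeneous hmul) hsσ hs x hx
  exact mem_annRset_add_of_supMulRight_eq_mul hs m hm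

end Graded

open Pointwise in
/-- if `R` is graded left self-injective, then for graded left
ideals `U, V` one has `ann_r(U) + ann_r(V) = ann_r(U ∩ V)` (pointwise sum). -/
theorem annR_add_annR_eq_annR_inf
    (𝒜 : G → AddSubgroup R) (h𝒜 : IsGRing 𝒜) (hinj : GrLeftSelfInjective 𝒜)
    (U V : Submodule R R) (hU : IsGradedLeftIdeal 𝒜 U) (hV : IsGradedLeftIdeal 𝒜 V) :
    annRset ((U ⊓ V : Submodule R R) : Set R) =
      annRset (U : Set R) + annRset (V : Set R) := by
  classical
  obtain ⟨-, hmul, hint⟩ := h𝒜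
  let := hint.chooseDecomposition
  have hUV : (U ⊓ V).IsHomogeneous 𝒜 := (hU.isHomogeneous hmul).inf (hV.isHomogeneous hmul)
  refine subset_antisymm (fun r hr => ?_) (annRset_add_annRset_subset _ _)
  rw [← sum_support_decompose 𝒜 r, ← coe_annRAddSubgroup_sup]
  refine AddSubgroup.sum_mem _ fun σ _ => ?_
  rw [← SetLike.mem_coe, coe_annRAddSubgroup_sup]
  exact mem_annRset_add_annRset_of_homogeneous hmul hinj hU hV (decompose 𝒜 r σ).2
    (decompose_mem_annRset hmul hUV hr σ)
end

section
/- Let R be a G-graded ring which is graded left injective. Then for any finitely generated graded right ideal A of R, ann_r(ann_ℓ(A)) = A. -/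
open DirectSum

universe u v w

variable {G : Type u} [Group G] [DecidableEq G]
variable {R : Type v} [Ring R]

section DoubleAnnihilatorAux

open DirectSum

variable (𝒜 : G → AddSubgroup R)

/-- Projection onto the degree-`g` component, as an additive monoid hom. -/
noncomputable def gradeProj [DirectSum.Decomposition 𝒜] (g : G) : R →+ R :=
  ((𝒜 g).subtype).comp ((DFinsupp.evalAddMonoidHom g).comp
    (DirectSum.decomposeAddEquiv 𝒜).toAddMonoidHom)

lemma gradeProj_apply [DirectSum.Decomposition 𝒜] (g : G) (x : R) :
    gradeProj 𝒜 g x = (DirectSum.decompose 𝒜 x g : R) := rfl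

lemma proj_mul_right [DirectSum.Decomposition 𝒜]
    (hmul : ∀ (g h : G) (a b : R), a ∈ 𝒜 g → b ∈ 𝒜 h → a * b ∈ 𝒜 (g * h))
    {d : G} {y : R} (hy : y ∈ 𝒜 d) (x : R) (h : G) :
    (DirectSum.decompose 𝒜 (x * y) (h * d) : R) = (DirectSum.decompose 𝒜 x h : R) * y := by
  classical
  have hs : x * y = ∑ b ∈ (DirectSum.decompose 𝒜 x).support,
      (DirectSum.decompose 𝒜 x b : R) * y := by
    rw [← Finset.sum_mul, DirectSum.sum_support_decompose]
  have h0 : (DirectSum.decompose 𝒜 (x * y) (h * d) : R)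
      = gradeProj 𝒜 (h * d) (x * y) := rfl
  rw [h0, hs, map_sum]
  refine (Finset.sum_eq_single h ?_ ?_).trans ?_
  · intro b _ hbh
    rw [gradeProj_apply, DirectSum.decompose_of_mem_ne 𝒜
      (hmul b d _ y (SetLike.coe_mem _) hy) (fun e => hbh (mul_right_cancel e))]
  · intro hh
    rw [DFinsupp.notMem_support_iff] at hh
    rw [gradeProj_apply, hh]
    simp
  · rw [gradeProj_apply, DirectSum.decompose_of_mem_same 𝒜
      (hmul h d _ y (SetLike.coe_mem _) hy)]

lemma proj_mul_left [DirectSum.Decomposition 𝒜]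
    (hmul : ∀ (g h : G) (a b : R), a ∈ 𝒜 g → b ∈ 𝒜 h → a * b ∈ 𝒜 (g * h))
    {d : G} {x : R} (hx : x ∈ 𝒜 d) (y : R) (h : G) :
    (DirectSum.decompose 𝒜 (x * y) (d * h) : R) = x * (DirectSum.decompose 𝒜 y h : R) := by
  classical
  have hs : x * y = ∑ b ∈ (DirectSum.decompose 𝒜 y).support,
      x * (DirectSum.decompose 𝒜 y b : R) := by
    rw [← Finset.mul_sum, DirectSum.sum_support_decompose]
  have h0 : (DirectSum.decompose 𝒜 (x * y) (d * h) : R)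
      = gradeProj 𝒜 (d * h) (x * y) := rfl
  rw [h0, hs, map_sum]
  refine (Finset.sum_eq_single h ?_ ?_).trans ?_
  · intro b _ hbh
    rw [gradeProj_apply, DirectSum.decompose_of_mem_ne 𝒜
      (hmul d b x _ hx (SetLike.coe_mem _)) (fun e => hbh (mul_left_cancel e))]
  · intro hh
    rw [DFinsupp.notMem_support_iff] at hh
    rw [gradeProj_apply, hh]
    simp
  · rw [gradeProj_apply, DirectSum.decompose_of_mem_same 𝒜
      (hmul d h x _ hx (SetLike.coe_mem _))]

/-- The key induction: a homogeneous element of `ann_r(ann_ℓ(A))` lies in `A`. -/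
lemma homog_mem_of_annRann [DirectSum.Decomposition 𝒜]
    (hmul : ∀ (g h : G) (a b : R), a ∈ 𝒜 g → b ∈ 𝒜 h → a * b ∈ 𝒜 (g * h))
    (hinj : GrLeftSelfInjective 𝒜) :
    ∀ (k : ℕ) (a : Fin k → R) (dg : Fin k → G), (∀ i, a i ∈ 𝒜 (dg i)) →
      ∀ (g : G) (b : R), b ∈ 𝒜 g → (∀ l : R, (∀ i, l * a i = 0) → l * b = 0) →
      b ∈ AddSubgroup.closure {x : R | ∃ (i : Fin k) (r : R), x = a i * r} := by
  intro k
  induction k with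
  | zero =>
    intro a dg ha g b hb hl
    have hz := hl 1 (fun i => i.elim0)
    rw [one_mul] at hz
    rw [hz]; exact zero_mem _
  | succ k IH =>
    intro a dg ha g b hb hl
    classical
    have hc : a (Fin.last k) ∈ 𝒜 (dg (Fin.last k)) := ha _
    set c : R := a (Fin.last k) with hc_def
    set dc : G := dg (Fin.last k) with hdc_def
    -- the graded left ideal `LB = ⋂ ann_ℓ(a i)` over the first `k` generators
    set LB : Submodule R R := ⨅ i : Fin k, annLIdeal (a i.castSucc) with hLB_def
    have hLB : ∀ s : R, s ∈ LB ↔ ∀ i : Fin k, s * a i.castSucc = 0 := by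
      intro s
      rw [hLB_def, Submodule.mem_iInf]
      exact Iff.rfl
    have hLBproj : ∀ s ∈ LB, ∀ h : G, (DirectSum.decompose 𝒜 s h : R) ∈ LB := by
      intro s hs h
      rw [hLB] at hs ⊢
      intro i
      have h2 := proj_mul_right 𝒜 hmul (ha i.castSucc) s h
      rw [hs i] at h2
      simpa using h2.symm
    -- the graded left ideal `J = LB * c`
    set J : Submodule R R := LB.map (LinearMap.toSpanSingleton R R c) with hJ_def
    have hJmem : ∀ x : R, x ∈ J ↔ ∃ s, s ∈ LB ∧ s * c = x := by
      intro x
      rw [hJ_def, Submodule.mem_map]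
      constructor
      · rintro ⟨s, hs, hx⟩
        exact ⟨s, hs, by simpa [LinearMap.toSpanSingleton_apply, smul_eq_mul] using hx⟩
      · rintro ⟨s, hs, hx⟩
        exact ⟨s, hs, by simpa [LinearMap.toSpanSingleton_apply, smul_eq_mul] using hx⟩
    have hJgraded : IsGradedLeftIdeal 𝒜 J := by
      refine le_antisymm ?_ ?_
      · intro x hx
        obtain ⟨s, hs, rfl⟩ := (hJmem x).mp hx
        rw [← DirectSum.sum_support_decompose 𝒜 s, Finset.sum_mul]
        refine Submodule.sum_mem _ (fun h _ => Submodule.subset_span ?_)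
        refine ⟨(hJmem _).mpr ⟨_, hLBproj s hs h, rfl⟩, ?_⟩
        exact Set.mem_iUnion.mpr ⟨h * dc, hmul _ _ _ _ (SetLike.coe_mem _) hc⟩
      · rw [Submodule.span_le]
        exact Set.inter_subset_left
    -- the two linear maps on `LB`
    set φ : LB →ₗ[R] R := (LinearMap.toSpanSingleton R R c).comp LB.subtype with hφ_def
    set ψ : LB →ₗ[R] R := (LinearMap.toSpanSingleton R R b).comp LB.subtype with hψ_def
    have hφ_apply : ∀ s : LB, φ s = (s : R) * c := by
      intro s; rw [hφ_def]; simp [LinearMap.toSpanSingleton_apply, smul_eq_mul]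
    have hψ_apply : ∀ s : LB, ψ s = (s : R) * b := by
      intro s; rw [hψ_def]; simp [LinearMap.toSpanSingleton_apply, smul_eq_mul]
    have hker : LinearMap.ker φ ≤ LinearMap.ker ψ := by
      intro s hsk
      rw [LinearMap.mem_ker, hφ_apply] at hsk
      rw [LinearMap.mem_ker, hψ_apply]
      refine hl (s : R) ?_
      intro i
      refine Fin.lastCases ?_ ?_ i
      · exact hsk
      · intro j; exact (hLB _).mp s.2 j
    have hrange : LinearMap.range φ = J := by
      rw [hφ_def, LinearMap.range_comp, Submodule.range_subtype]
    -- the induced map `f : J → R`, `s * c ↦ s * b`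
    set f : J →ₗ[R] R :=
      (Submodule.liftQ (LinearMap.ker φ) ψ hker).comp
        ((LinearMap.quotKerEquivRange φ).symm.toLinearMap.comp
          (LinearEquiv.ofEq J (LinearMap.range φ) hrange.symm).toLinearMap) with hf_def
    have hf_apply : ∀ (s : R) (hs : s ∈ LB) (hx : s * c ∈ J), f ⟨s * c, hx⟩ = s * b := by
      intro s hs hx
      have h1 : (LinearEquiv.ofEq J (LinearMap.range φ) hrange.symm) ⟨s * c, hx⟩
          = ⟨φ ⟨s, hs⟩, LinearMap.mem_range_self φ _⟩ := by
        apply Subtype.ext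
        rw [LinearEquiv.coe_ofEq_apply]
        exact (hφ_apply ⟨s, hs⟩).symm
      rw [hf_def, LinearMap.comp_apply, LinearMap.comp_apply, LinearEquiv.coe_toLinearMap,
        LinearEquiv.coe_toLinearMap, h1, LinearMap.quotKerEquivRange_symm_apply_image,
        Submodule.mkQ_apply, Submodule.liftQ_apply, hψ_apply]
    -- `f` is graded of degree `dc⁻¹ * g`
    have hgr : ∀ (g' : G) (x : J), (x : R) ∈ 𝒜 g' → f x ∈ 𝒜 (g' * (dc⁻¹ * g)) := by
      intro g' x hxg
      obtain ⟨s, hs, hsc⟩ := (hJmem x).mp x.2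
      have h2 := proj_mul_right 𝒜 hmul hc s (g' * dc⁻¹)
      rw [inv_mul_cancel_right, hsc] at h2
      have hxval : (x : R) = (DirectSum.decompose 𝒜 s (g' * dc⁻¹) : R) * c := by
        rw [← h2]
        exact (DirectSum.decompose_of_mem_same 𝒜 hxg).symm
      have hs' : (DirectSum.decompose 𝒜 s (g' * dc⁻¹) : R) ∈ LB := hLBproj s hs _
      have hxJ : (DirectSum.decompose 𝒜 s (g' * dc⁻¹) : R) * c ∈ J :=
        (hJmem _).mpr ⟨_, hs', rfl⟩
      have hxeq : x = ⟨_, hxJ⟩ := Subtype.ext hxval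
      rw [hxeq, hf_apply _ hs' hxJ]
      have hmem := hmul _ _ _ _ (SetLike.coe_mem (DirectSum.decompose 𝒜 s (g' * dc⁻¹))) hb
      rwa [mul_assoc] at hmem
    obtain ⟨m, hm, hfm⟩ := hinj J hJgraded (dc⁻¹ * g) f hgr
    have hcm : c * m ∈ 𝒜 g := by
      have hmem := hmul _ _ _ _ hc hm
      rwa [mul_inv_cancel_left] at hmem
    have key2 : ∀ s : R, (∀ i : Fin k, s * a i.castSucc = 0) → s * (b - c * m) = 0 := by
      intro s hsi
      have hs : s ∈ LB := (hLB s).mpr hsi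
      have hmemJ : s * c ∈ J := (hJmem _).mpr ⟨s, hs, rfl⟩
      have h1 : f ⟨s * c, hmemJ⟩ = s * b := hf_apply s hs hmemJ
      have h2 := hfm ⟨s * c, hmemJ⟩
      rw [h1] at h2
      rw [mul_sub, ← mul_assoc, h2, sub_self]
    have hbi := IH (fun i => a i.castSucc) (fun i => dg i.castSucc) (fun i => ha i.castSucc)
      g (b - c * m) (sub_mem hb hcm) key2
    have hsub : AddSubgroup.closure {x : R | ∃ (i : Fin k) (r : R), x = a i.castSucc * r}
        ≤ AddSubgroup.closure {x : R | ∃ (i : Fin (k + 1)) (r : R), x = a i * r} := by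
      refine AddSubgroup.closure_mono ?_
      rintro x ⟨i, r, hx⟩
      exact ⟨i.castSucc, r, hx⟩
    have hcmA : c * m ∈ AddSubgroup.closure {x : R | ∃ (i : Fin (k + 1)) (r : R), x = a i * r} :=
      AddSubgroup.subset_closure ⟨Fin.last k, m, by rw [hc_def]⟩
    have hfin := add_mem (hsub hbi) hcmA
    simpa using hfin

end DoubleAnnihilatorAux

/-- if `R` is graded left self-injective, then the double
annihilator condition `ann_r(ann_ℓ(A)) = A` holds for every graded right ideal
`A` generated by finitely many homogeneous elements `a i` of degrees `dg i`. -/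
theorem double_annihilator_of_fg_graded_right_ideal
    (𝒜 : G → AddSubgroup R) (h𝒜 : IsGRing 𝒜) (hinj : GrLeftSelfInjective 𝒜)
    (k : ℕ) (a : Fin k → R) (dg : Fin k → G) (ha : ∀ i, a i ∈ 𝒜 (dg i)) :
    annRset (annLset
        ((AddSubgroup.closure {x : R | ∃ (i : Fin k) (r : R), x = a i * r} : AddSubgroup R) : Set R)) =
      ((AddSubgroup.closure {x : R | ∃ (i : Fin k) (r : R), x = a i * r} : AddSubgroup R) : Set R) := by
  classical
  obtain ⟨h1, hmul, hint⟩ := h𝒜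
  letI : DirectSum.Decomposition 𝒜 := hint.chooseDecomposition
  apply Set.Subset.antisymm
  · intro b hb
    have hLchar : ∀ l : R,
        l ∈ annLset ((AddSubgroup.closure {x : R | ∃ (i : Fin k) (r : R), x = a i * r} :
          AddSubgroup R) : Set R) ↔ ∀ i, l * a i = 0 := by
      intro l
      constructor
      · intro hlp i
        exact hlp (a i) (AddSubgroup.subset_closure ⟨i, 1, (mul_one _).symm⟩)
      · intro hli x hx
        refine AddSubgroup.closure_induction ?_ ?_ ?_ ?_ hx
        · rintro y ⟨i, r, rfl⟩
          rw [← mul_assoc, hli i, zero_mul]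
        · exact mul_zero l
        · intro y z _ _ hy hz
          rw [mul_add, hy, hz, add_zero]
        · intro y _ hy
          rw [mul_neg, hy, neg_zero]
    have hb' : ∀ l : R, (∀ i, l * a i = 0) → l * b = 0 := fun l hli =>
      hb l ((hLchar l).mpr hli)
    rw [SetLike.mem_coe, ← DirectSum.sum_support_decompose 𝒜 b]
    refine sum_mem ?_
    intro g _
    refine homog_mem_of_annRann 𝒜 hmul hinj k a dg ha g _ (SetLike.coe_mem _) ?_
    intro l hli
    rw [← DirectSum.sum_support_decompose 𝒜 l, Finset.sum_mul]
    refine Finset.sum_eq_zero ?_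
    intro h _
    have hlh : ∀ i, (DirectSum.decompose 𝒜 l h : R) * a i = 0 := by
      intro i
      have h2 := proj_mul_right 𝒜 hmul (ha i) l h
      rw [hli i] at h2
      simpa using h2.symm
    have hlb : (DirectSum.decompose 𝒜 l h : R) * b = 0 := hb' _ hlh
    have h3 := proj_mul_left 𝒜 hmul (SetLike.coe_mem (DirectSum.decompose 𝒜 l h)) b g
    rw [hlb] at h3
    simpa using h3.symm
  · intro x hx l hl
    exact hl x hx
end

section
/- Let R be a G-graded ring and M a maximal graded left ideal of R. The following are equivalent: (1) there exists g ∈ G such that (R/M)(g) embeds into R as graded left R-modules; (2) M = ann_ℓ(x) for some homogeneous x ∈ R; (3) ann_r(M) ≠ 0; (4) M = ann_ℓ(ann_r(M)). -/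
open DirectSum

universe u v w

variable {G : Type u} [Group G] [DecidableEq G]
variable {R : Type v} [Ring R]

/-- The left annihilator of a set, as a left ideal (submodule of `R`). -/
def annLSubmodule (Y : Set R) : Submodule R R where
  carrier := {r : R | ∀ y ∈ Y, r * y = 0}
  add_mem' := by
    intro a b ha hb; intro y hy
    rw [add_mul, ha y hy, hb y hy, add_zero]
  zero_mem' := by intro y hy; rw [zero_mul]
  smul_mem' := by
    intro c a ha; intro y hy
    show c * a * y = 0
    rw [mul_assoc, ha y hy, mul_zero]

section AuxGraded
variable {ι : Type u} [AddGroup ι] [DecidableEq ι]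
variable (ℬ : ι → AddSubgroup R) [GradedRing ℬ]

theorem aux_span_inter_of_isHomogeneous (I : Submodule R R)
    (hI : Ideal.IsHomogeneous ℬ I) :
    I = Submodule.span R ((I : Set R) ∩ ⋃ i, (ℬ i : Set R)) := by
  classical
  refine le_antisymm ?_ (Submodule.span_le.2 Set.inter_subset_left)
  intro r hr
  rw [← DirectSum.sum_support_decompose ℬ r]
  exact Submodule.sum_mem _ fun i _ => Submodule.subset_span
    ⟨hI i hr, Set.mem_iUnion.2 ⟨i, (decompose ℬ r i).2⟩⟩

theorem aux_annR_component_mem (I : Submodule R R)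
    (hI : I = Submodule.span R ((I : Set R) ∩ ⋃ i, (ℬ i : Set R)))
    {y : R} (hy : ∀ m ∈ I, m * y = 0) (i : ι) :
    ∀ m ∈ I, m * (decompose ℬ y i : R) = 0 := by
  intro m hm
  have hm' : m ∈ Submodule.span R ((I : Set R) ∩ ⋃ g, (ℬ g : Set R)) := hI ▸ hm
  refine Submodule.span_induction (p := fun m _ => m * (decompose ℬ y i : R) = 0)
    ?_ (by show (0:R) * _ = 0; rw [zero_mul])
    (fun a b _ _ ha hb => by show (a + b) * _ = 0; rw [add_mul, ha, hb, add_zero])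
    (fun c a _ ha => by show c * a * _ = 0; rw [mul_assoc, ha, mul_zero]) hm'
  rintro x ⟨hxI, hxU⟩
  obtain ⟨j, hxj⟩ := Set.mem_iUnion.1 hxU
  have h0 : x * y = 0 := hy x hxI
  have := DirectSum.coe_decompose_mul_add_of_left_mem ℬ (j := i) hxj (b := y)
  rw [h0, decompose_zero] at this
  simpa using this.symm

theorem aux_annL_isHomogeneous (Y : Set R)
    (hY : ∀ y ∈ Y, ∀ i, (decompose ℬ y i : R) ∈ Y) :
    Ideal.IsHomogeneous ℬ (annLSubmodule Y) := by
  classical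
  intro i r hr
  intro y hy
  have hsum := DirectSum.sum_support_decompose ℬ y
  calc (decompose ℬ r i : R) * y
      = ∑ j ∈ (decompose ℬ y).support, (decompose ℬ r i : R) * (decompose ℬ y j : R) := by
        rw [← Finset.mul_sum, hsum]
    _ = 0 := Finset.sum_eq_zero fun j _ => by
        have h1 : r * (decompose ℬ y j : R) = 0 := hr _ (hY y hy j)
        have h2 := DirectSum.coe_decompose_mul_add_of_right_mem ℬ (i := i)
          (decompose ℬ y j).2 (a := r)
        rw [h1, decompose_zero] at h2
        simpa using h2.symm

end AuxGraded

/-- for a maximal graded left ideal `M` of `R`, the four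
conditions (some shift of `R/M` embeds into `R` in `R`-gr; `M` is the left
annihilator of a homogeneous element; `ann_r(M) ≠ 0`; `M = ann_ℓ(ann_r(M))`)
are equivalent. -/
theorem maximal_graded_left_ideal_tfae
    (𝒜 : G → AddSubgroup R) (h𝒜 : IsGRing 𝒜)
    (M : Submodule R R) (hM : IsMaxGradedLeftIdeal 𝒜 M) :
    [ (∃ g : G, ∃ f : (R ⧸ M) →ₗ[R] R, Function.Injective f ∧
        ∀ h : G, ∀ x ∈ 𝒜 (h * g), f (Submodule.Quotient.mk x) ∈ 𝒜 h),
      (∃ (h : G) (x : R), x ∈ 𝒜 h ∧ (M : Set R) = annLset {x}),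
      (annRset (M : Set R) ≠ {0}),
      ((M : Set R) = annLset (annRset (M : Set R))) ].TFAE := by
  classical
  obtain ⟨hone, hmul, hint⟩ := h𝒜
  obtain ⟨hMgr, hMne, hMmax⟩ := hM
  set ℬ : Additive G → AddSubgroup R := fun i => 𝒜 (Additive.toMul i) with hB
  letI : SetLike.GradedMonoid ℬ :=
    { one_mem := hone, mul_mem := fun {i j} {a b} ha hb => hmul _ _ _ _ ha hb }
  have hintB : DirectSum.IsInternal ℬ := hint
  letI : DirectSum.Decomposition ℬ := hintB.chooseDecomposition
  letI : GradedRing ℬ := ⟨⟩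
  have hUnion : (⋃ i : Additive G, (ℬ i : Set R)) = ⋃ g : G, ((𝒜 g : Set R)) := by
    ext x
    simp only [Set.mem_iUnion]
    exact ⟨fun ⟨i, h⟩ => ⟨Additive.toMul i, h⟩, fun ⟨g, h⟩ => ⟨Additive.ofMul g, h⟩⟩
  have hgrOf : ∀ J : Submodule R R, Ideal.IsHomogeneous ℬ J → IsGradedLeftIdeal 𝒜 J := by
    intro J hJ
    unfold IsGradedLeftIdeal
    rw [← hUnion]
    exact aux_span_inter_of_isHomogeneous ℬ J hJ
  have hMB : M = Submodule.span R ((M : Set R) ∩ ⋃ i, (ℬ i : Set R)) := by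
    rw [hUnion]; exact hMgr
  have key : ∀ J : Submodule R R, M ≤ J → IsGradedLeftIdeal 𝒜 J → J ≠ ⊤ → M = J := by
    intro J hle hgr hne
    rcases lt_or_eq_of_le hle with h | h
    · exact absurd (hMmax J hgr h) hne
    · exact h
  have hYcomp : ∀ y ∈ annRset (M : Set R), ∀ i, (DirectSum.decompose ℬ y i : R) ∈ annRset (M : Set R) := by
    intro y hy i m hm
    exact aux_annR_component_mem ℬ M hMB (fun m hm => hy m hm) i m hm
  have hann_ne_top : ∀ Y : Set R, (∃ y ∈ Y, y ≠ 0) → annLSubmodule Y ≠ ⊤ := by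
    rintro Y ⟨y, hy, hy0⟩ htop
    have h1 : (1:R) ∈ annLSubmodule Y := htop ▸ Submodule.mem_top
    exact hy0 (by simpa using h1 y hy)
  tfae_have 1 → 2 := by
    rintro ⟨g, f, hinj, hgr⟩
    refine ⟨g⁻¹, f (Submodule.Quotient.mk 1), hgr g⁻¹ 1 (by rw [inv_mul_cancel]; exact hone), ?_⟩
    ext r
    have hfr : f (Submodule.Quotient.mk r) = r * f (Submodule.Quotient.mk 1) := by
      have h1 : (Submodule.Quotient.mk r : R ⧸ M) = r • (Submodule.Quotient.mk 1 : R ⧸ M) := by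
        rw [← Submodule.Quotient.mk_smul, smul_eq_mul, mul_one]
      rw [h1, map_smul, smul_eq_mul]
    constructor
    · intro hr z hz
      rw [Set.mem_singleton_iff] at hz
      subst hz
      rw [← hfr, (Submodule.Quotient.mk_eq_zero M).2 hr, map_zero]
    · intro hr
      have h0 : f (Submodule.Quotient.mk r) = 0 := by rw [hfr]; exact hr _ rfl
      exact (Submodule.Quotient.mk_eq_zero M).1 (hinj (by rw [h0, map_zero]))
  tfae_have 2 → 1 := by
    rintro ⟨h, x, hx, hMx⟩
    have hmem : ∀ r : R, r ∈ M ↔ r * x = 0 := by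
      intro r
      have h1 : r ∈ (M : Set R) ↔ r ∈ annLset {x} := by rw [hMx]
      simpa [annLset] using h1
    have hle : M ≤ LinearMap.ker (LinearMap.toSpanSingleton R R x) := by
      intro m hm
      simpa [LinearMap.mem_ker, LinearMap.toSpanSingleton_apply, smul_eq_mul] using (hmem m).1 hm
    refine ⟨h⁻¹, Submodule.liftQ M _ hle, ?_, ?_⟩
    · rw [← LinearMap.ker_eq_bot]
      apply Submodule.ker_liftQ_eq_bot
      intro r hr
      have : r * x = 0 := by
        simpa [LinearMap.mem_ker, LinearMap.toSpanSingleton_apply, smul_eq_mul] using hr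
      exact (hmem r).2 this
    · intro k x' hx'
      rw [Submodule.liftQ_apply]
      have := hmul _ _ _ _ hx' hx
      rw [inv_mul_cancel_right] at this
      simpa [LinearMap.toSpanSingleton_apply, smul_eq_mul] using this
  tfae_have 2 → 3 := by
    rintro ⟨h, x, hx, hMx⟩ hEq
    have hmem : ∀ r : R, r ∈ M ↔ r * x = 0 := by
      intro r
      have h1 : r ∈ (M : Set R) ↔ r ∈ annLset {x} := by rw [hMx]
      simpa [annLset] using h1
    have hx0 : x ≠ 0 := by
      rintro rfl
      exact hMne (by ext r; simp [hmem r])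
    have hxmem : x ∈ annRset (M : Set R) := fun m hm => (hmem m).1 hm
    rw [hEq] at hxmem
    exact hx0 (Set.mem_singleton_iff.1 hxmem)
  tfae_have 3 → 4 := by
    intro h3
    have hJhom : Ideal.IsHomogeneous ℬ (annLSubmodule (annRset (M : Set R))) :=
      aux_annL_isHomogeneous ℬ _ hYcomp
    have hle : M ≤ annLSubmodule (annRset (M : Set R)) := fun m hm y hy => hy m hm
    have hne : ∃ y ∈ annRset (M : Set R), y ≠ 0 := by
      by_contra hcon
      push_neg at hcon
      apply h3
      ext z
      simp only [Set.mem_singleton_iff]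
      exact ⟨fun hz => hcon z hz, fun hz => hz ▸ (fun m _ => mul_zero m)⟩
    have hMeq := key _ hle (hgrOf _ hJhom) (hann_ne_top _ hne)
    show (M : Set R) = ((annLSubmodule (annRset (M : Set R)) : Submodule R R) : Set R)
    exact congrArg SetLike.coe hMeq
  tfae_have 4 → 2 := by
    intro h4
    have hYne : ∃ y ∈ annRset (M : Set R), y ≠ 0 := by
      by_contra hcon
      push_neg at hcon
      have hE : annRset (M : Set R) = {0} := by
        ext z
        simp only [Set.mem_singleton_iff]
        exact ⟨fun hz => hcon z hz, fun hz => hz ▸ (fun m _ => mul_zero m)⟩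
      apply hMne
      ext r
      simp only [Submodule.mem_top, iff_true]
      show r ∈ (M : Set R)
      rw [h4, hE]
      intro z hz
      rw [Set.mem_singleton_iff.1 hz, mul_zero]
    obtain ⟨y, hyY, hy0⟩ := hYne
    have hcomp : ∃ i : Additive G, (DirectSum.decompose ℬ y i : R) ≠ 0 := by
      by_contra hcon
      push_neg at hcon
      apply hy0
      rw [← DirectSum.sum_support_decompose ℬ y]
      exact Finset.sum_eq_zero fun i _ => hcon i
    obtain ⟨i, hi0⟩ := hcomp
    set c : R := (DirectSum.decompose ℬ y i : R) with hc
    have hcY : c ∈ annRset (M : Set R) := hYcomp y hyY i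
    have hcB : c ∈ ℬ i := (DirectSum.decompose ℬ y i).2
    have hJ2hom : Ideal.IsHomogeneous ℬ (annLSubmodule {c, 0}) := by
      apply aux_annL_isHomogeneous
      intro z hz j
      simp only [Set.mem_insert_iff, Set.mem_singleton_iff] at hz
      rcases hz with rfl | rfl
      · by_cases hji : i = j
        · subst hji
          rw [DirectSum.decompose_of_mem_same ℬ hcB]
          exact Set.mem_insert _ _
        · rw [DirectSum.decompose_of_mem_ne ℬ hcB hji]
          exact Set.mem_insert_of_mem _ rfl
      · have h0 : (DirectSum.decompose ℬ (0:R) j : R) = 0 := by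
          rw [DirectSum.decompose_zero]; simp
        rw [h0]
        exact Set.mem_insert_of_mem _ rfl
    have hle2 : M ≤ annLSubmodule {c, 0} := by
      intro m hm z hz
      simp only [Set.mem_insert_iff, Set.mem_singleton_iff] at hz
      rcases hz with rfl | rfl
      · exact (show m ∈ annLset (annRset (M : Set R)) from h4 ▸ hm) c hcY
      · exact mul_zero m
    have hMeq := key _ hle2 (hgrOf _ hJ2hom) (hann_ne_top _ ⟨c, Set.mem_insert _ _, hi0⟩)
    refine ⟨Additive.toMul i, c, hcB, ?_⟩
    ext r
    constructor
    · intro hr z hz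
      rw [Set.mem_singleton_iff.1 hz]
      exact (show r ∈ annLSubmodule {c, 0} from hMeq ▸ hr) c (Set.mem_insert _ _)
    · intro hr
      show r ∈ M
      rw [hMeq]
      intro z hz
      simp only [Set.mem_insert_iff, Set.mem_singleton_iff] at hz
      rcases hz with rfl | rfl
      · exact hr c rfl
      · exact mul_zero r
  tfae_finish
end
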